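/- arXiv:1902.10853 — 8 statements merged into one kernel-verified Lean document; each statement's English description precedes it below -/
import Mathlib

section
/- Let (Γ, G) be a pair with Γ a connected 4-valent G-oriented graph, and let s ≥ 1 be the largest integer such that G acts transitively on the set of oriented s-arcs of Γ. Then G acts regularly on the oriented s-arcs of Γ. -/
noncomputable def outFin {V : Type*} [Fintype V] (O : V → V → Prop) (v : V) : Finset V :=
  @Finset.filter _ (fun w => O v w) (Classical.decPred _) Finset.univ

lemma mem_outFin {V : Type*} [Fintype V] {O : V → V → Prop} {v w : V} :
    w ∈ outFin O v ↔ O v w := by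
  classical
  simp [outFin]

lemma two_mem {V : Type*} [DecidableEq V] {S : Finset V} (h : S.card = 2) {a b c : V}
    (ha : a ∈ S) (hb : b ∈ S) (hc : c ∈ S) (hab : a ≠ b) : c = a ∨ c = b := by
  obtain ⟨x, y, hxy, rfl⟩ := Finset.card_eq_two.1 h
  simp only [Finset.mem_insert, Finset.mem_singleton] at ha hb hc
  rcases ha with rfl|rfl <;> rcases hb with rfl|rfl <;> rcases hc with rfl|rfl <;> tauto

lemma degree_two {V : Type*} [Fintype V] (Γ : SimpleGraph V) [DecidableRel Γ.Adj]
    (hconn : Γ.Connected) (hval : ∀ v : V, Γ.degree v = 4)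
    (G : Subgroup (Equiv.Perm V))
    (hVT : ∀ u v : V, ∃ g ∈ G, g u = v)
    (O : V → V → Prop)
    (hO1 : ∀ u v : V, Γ.Adj u v ↔ (O u v ∨ O v u))
    (hO2 : ∀ u v : V, O u v → ¬ O v u)
    (hOG : ∀ g ∈ G, ∀ u v : V, O u v → O (g u) (g v)) :
    ∀ v : V, (outFin O v).card = 2 ∧ (outFin (fun a b => O b a) v).card = 2 := by
  classical
  -- image under g
  have himg : ∀ g ∈ G, ∀ v : V, outFin O ((g : Equiv.Perm V) v) = (outFin O v).image g := by
    intro g hg v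
    ext w
    simp only [mem_outFin, Finset.mem_image]
    constructor
    · intro hw
      exact ⟨g⁻¹ w, by simpa using hOG g⁻¹ (inv_mem hg) _ _ hw, by simp⟩
    · rintro ⟨u, hu, rfl⟩
      exact hOG g hg _ _ hu
  have himg' : ∀ g ∈ G, ∀ v : V, outFin (fun a b => O b a) ((g : Equiv.Perm V) v)
      = (outFin (fun a b => O b a) v).image g := by
    intro g hg v
    ext w
    simp only [mem_outFin, Finset.mem_image]
    constructor
    · intro hw
      exact ⟨g⁻¹ w, by simpa using hOG g⁻¹ (inv_mem hg) _ _ hw, by simp⟩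
    · rintro ⟨u, hu, rfl⟩
      exact hOG g hg _ _ hu
  have hconst : ∀ u v : V, (outFin O u).card = (outFin O v).card := by
    intro u v
    obtain ⟨g, hg, rfl⟩ := hVT u v
    rw [himg g hg u, Finset.card_image_of_injective _ (Equiv.injective _)]
  have hconst' : ∀ u v : V, (outFin (fun a b => O b a) u).card
      = (outFin (fun a b => O b a) v).card := by
    intro u v
    obtain ⟨g, hg, rfl⟩ := hVT u v
    rw [himg' g hg u, Finset.card_image_of_injective _ (Equiv.injective _)]
  -- split of degree
  have hsplit : ∀ v : V, (outFin O v).card + (outFin (fun a b => O b a) v).card = 4 := by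
    intro v
    have hdisj : Disjoint (outFin O v) (outFin (fun a b => O b a) v) := by
      rw [Finset.disjoint_left]
      intro w hw hw'
      rw [mem_outFin] at hw
      rw [mem_outFin] at hw'
      exact hO2 _ _ hw hw' 
    rw [← Finset.card_union_of_disjoint hdisj, ← hval v, ← SimpleGraph.card_neighborFinset_eq_degree]
    congr 1
    ext w
    simp only [Finset.mem_union, mem_outFin, SimpleGraph.mem_neighborFinset]
    rw [hO1]
  -- sum equality
  have hsum : ∑ v : V, (outFin O v).card = ∑ v : V, (outFin (fun a b => O b a) v).card := by
    have h1 : ∀ v : V, (outFin O v).card = ∑ w : V, (if O v w then 1 else 0) := by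
      intro v
      rw [outFin]
      rw [Finset.card_filter]
    have h2 : ∀ v : V, (outFin (fun a b => O b a) v).card
        = ∑ w : V, (if O w v then 1 else 0) := by
      intro v
      rw [outFin]
      rw [Finset.card_filter]
    simp only [h1, h2]
    rw [Finset.sum_comm]
  haveI hne : Nonempty V := hconn.nonempty
  obtain ⟨v₀⟩ := hne
  have hc1 : ∑ v : V, (outFin O v).card = Fintype.card V * (outFin O v₀).card := by
    rw [Finset.sum_congr rfl (fun v _ => hconst v v₀), Finset.sum_const, smul_eq_mul,
      Finset.card_univ]
  have hc2 : ∑ v : V, (outFin (fun a b => O b a) v).card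
      = Fintype.card V * (outFin (fun a b => O b a) v₀).card := by
    rw [Finset.sum_congr rfl (fun v _ => hconst' v v₀), Finset.sum_const, smul_eq_mul,
      Finset.card_univ]
  have hcardpos : 0 < Fintype.card V := Fintype.card_pos_iff.2 ⟨v₀⟩
  have heq : (outFin O v₀).card = (outFin (fun a b => O b a) v₀).card :=
    Nat.eq_of_mul_eq_mul_left hcardpos (by rw [← hc1, ← hc2, hsum])
  have h4 := hsplit v₀
  intro v
  constructor
  · rw [hconst v v₀]; omega
  · rw [hconst' v v₀]; omega

lemma swap_fwd {V : Type*} [Fintype V] (G : Subgroup (Equiv.Perm V)) (O : V → V → Prop) (s : ℕ)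
    (hOG : ∀ g ∈ G, ∀ u v : V, O u v → O (g u) (g v))
    (hout : ∀ v : V, (outFin O v).card = 2)
    (htransN : ∀ f g : ℕ → V, (∀ i < s, O (f i) (f (i+1))) → (∀ i < s, O (g i) (g (i+1))) →
      ∃ γ ∈ G, ∀ i ≤ s, γ (f i) = g i)
    (hmaxN : ∃ F Q : ℕ → V, (∀ i < s+1, O (F i) (F (i+1))) ∧ (∀ i < s+1, O (Q i) (Q (i+1))) ∧
      ∀ γ ∈ G, ¬ ∀ i ≤ s+1, γ (F i) = Q i) :
    ∀ h : Equiv.Perm V, h ∈ G → ∀ f : ℕ → V, (∀ i < s, O (f i) (f (i+1))) →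
      (∀ i ≤ s, h (f i) = f i) → ∀ w, O (f s) w → h w = w := by
  classical
  intro h hh f harc hfixed
  by_contra hbad
  push_neg at hbad
  obtain ⟨w, hw, hmove⟩ := hbad
  obtain ⟨F, Q, hF, hQ, hnot⟩ := hmaxN
  have hfs : h (f s) = f s := hfixed s le_rfl
  have hw2 : O (f s) (h w) := by have := hOG h hh _ _ hw; rwa [hfs] at this
  have hswap : h (h w) = w := by
    have h3 : O (f s) (h (h w)) := by have := hOG h hh _ _ hw2; rwa [hfs] at this
    rcases two_mem (hout (f s)) (mem_outFin.2 hw) (mem_outFin.2 hw2) (mem_outFin.2 h3)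
      (Ne.symm hmove) with e | e
    · exact e
    · exact absurd (h.injective e) hmove
  obtain ⟨γ, hγ, hγi⟩ := htransN F Q (fun i hi => hF i (by omega)) (fun i hi => hQ i (by omega))
  obtain ⟨τ, hτ, hτi⟩ := htransN f Q harc (fun i hi => hQ i (by omega))
  set δ : Equiv.Perm V := τ * h * τ⁻¹ with hδdef
  have hδG : δ ∈ G := mul_mem (mul_mem hτ hh) (inv_mem hτ)
  have hδfix : ∀ i ≤ s, δ (Q i) = Q i := by
    intro i hi
    have h1 : τ⁻¹ (Q i) = f i := by rw [← hτi i hi]; simp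
    show (τ * h * τ⁻¹) (Q i) = Q i
    rw [Equiv.Perm.mul_apply, Equiv.Perm.mul_apply, h1, hfixed i hi, hτi i hi]
  have hδw : δ (τ w) = τ (h w) := by
    show (τ * h * τ⁻¹) (τ w) = τ (h w)
    rw [Equiv.Perm.mul_apply, Equiv.Perm.mul_apply]
    simp
  have hδw2 : δ (τ (h w)) = τ w := by
    show (τ * h * τ⁻¹) (τ (h w)) = τ w
    rw [Equiv.Perm.mul_apply, Equiv.Perm.mul_apply]
    simp [hswap]
  have hQs : O (Q s) (τ w) := by have := hOG τ hτ _ _ hw; rwa [hτi s le_rfl] at this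
  have hQs2 : O (Q s) (τ (h w)) := by have := hOG τ hτ _ _ hw2; rwa [hτi s le_rfl] at this
  have hne : τ w ≠ τ (h w) := fun e => (Ne.symm hmove) (τ.injective e)
  have hx : O (Q s) (γ (F (s+1))) := by
    have := hOG γ hγ _ _ (hF s (by omega)); rwa [hγi s le_rfl] at this
  have hq1 : O (Q s) (Q (s+1)) := hQ s (by omega)
  by_cases hcase : γ (F (s+1)) = Q (s+1)
  · refine hnot γ hγ (fun i hi => ?_)
    rcases Nat.lt_or_ge i (s+1) with h' | h'
    · exact hγi i (by omega)
    · have : i = s + 1 := by omega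
      rw [this]; exact hcase
  · have hmm := two_mem (hout (Q s)) (mem_outFin.2 hQs) (mem_outFin.2 hQs2)
      (mem_outFin.2 hx) hne
    have hmm2 := two_mem (hout (Q s)) (mem_outFin.2 hQs) (mem_outFin.2 hQs2)
      (mem_outFin.2 hq1) hne
    have hkey : δ (γ (F (s+1))) = Q (s+1) := by
      rcases hmm with e | e <;> rcases hmm2 with e2 | e2
    --cases
      · exact absurd (e.trans e2.symm) hcase
      · rw [e, hδw, ← e2]
      · rw [e, hδw2, ← e2]
      · exact absurd (e.trans e2.symm) hcase
    refine hnot (δ * γ) (mul_mem hδG hγ) (fun i hi => ?_)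
    rcases Nat.lt_or_ge i (s+1) with h' | h'
    · show δ (γ (F i)) = Q i
      rw [hγi i (by omega), hδfix i (by omega)]
    · have : i = s + 1 := by omega
      rw [this]; exact hkey

lemma swap_bwd {V : Type*} [Fintype V] (G : Subgroup (Equiv.Perm V)) (O : V → V → Prop) (s : ℕ)
    (hOG : ∀ g ∈ G, ∀ u v : V, O u v → O (g u) (g v))
    (hin : ∀ v : V, (outFin (fun a b => O b a) v).card = 2)
    (htransN : ∀ f g : ℕ → V, (∀ i < s, O (f i) (f (i+1))) → (∀ i < s, O (g i) (g (i+1))) →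
      ∃ γ ∈ G, ∀ i ≤ s, γ (f i) = g i)
    (hmaxN : ∃ F Q : ℕ → V, (∀ i < s+1, O (F i) (F (i+1))) ∧ (∀ i < s+1, O (Q i) (Q (i+1))) ∧
      ∀ γ ∈ G, ¬ ∀ i ≤ s+1, γ (F i) = Q i) :
    ∀ h : Equiv.Perm V, h ∈ G → ∀ f : ℕ → V, (∀ i < s, O (f i) (f (i+1))) →
      (∀ i ≤ s, h (f i) = f i) → ∀ w, O w (f 0) → h w = w := by
  classical
  intro h hh f harc hfixed
  by_contra hbad
  push_neg at hbad
  obtain ⟨w, hw, hmove⟩ := hbad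
  obtain ⟨F, Q, hF, hQ, hnot⟩ := hmaxN
  have hf0 : h (f 0) = f 0 := hfixed 0 (by omega)
  have hw2 : O (h w) (f 0) := by have := hOG h hh _ _ hw; rwa [hf0] at this
  have hmemf : ∀ {x : V}, O x (f 0) → x ∈ outFin (fun a b => O b a) (f 0) :=
    fun hx => mem_outFin.2 hx
  have hswap : h (h w) = w := by
    have h3 : O (h (h w)) (f 0) := by have := hOG h hh _ _ hw2; rwa [hf0] at this
    rcases two_mem (hin (f 0)) (hmemf hw) (hmemf hw2) (hmemf h3) (Ne.symm hmove) with e | e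
    · exact e
    · exact absurd (h.injective e) hmove
  obtain ⟨γ, hγ, hγi⟩ := htransN (fun i => F (i+1)) (fun i => Q (i+1))
    (fun i hi => hF (i+1) (by omega)) (fun i hi => hQ (i+1) (by omega))
  obtain ⟨τ, hτ, hτi⟩ := htransN f (fun i => Q (i+1)) harc (fun i hi => hQ (i+1) (by omega))
  set δ : Equiv.Perm V := τ * h * τ⁻¹ with hδdef
  have hδG : δ ∈ G := mul_mem (mul_mem hτ hh) (inv_mem hτ)
  have hδfix : ∀ i ≤ s, δ (Q (i+1)) = Q (i+1) := by
    intro i hi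
    have h1 : τ⁻¹ (Q (i+1)) = f i := by rw [← hτi i hi]; simp
    show (τ * h * τ⁻¹) (Q (i+1)) = Q (i+1)
    rw [Equiv.Perm.mul_apply, Equiv.Perm.mul_apply, h1, hfixed i hi, hτi i hi]
  have hδw : δ (τ w) = τ (h w) := by
    show (τ * h * τ⁻¹) (τ w) = τ (h w)
    rw [Equiv.Perm.mul_apply, Equiv.Perm.mul_apply]; simp
  have hδw2 : δ (τ (h w)) = τ w := by
    show (τ * h * τ⁻¹) (τ (h w)) = τ w
    rw [Equiv.Perm.mul_apply, Equiv.Perm.mul_apply]; simp [hswap]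
  have hτf0 : τ (f 0) = Q 1 := hτi 0 (by omega)
  have hQs : O (τ w) (Q 1) := by have := hOG τ hτ _ _ hw; rwa [hτf0] at this
  have hQs2 : O (τ (h w)) (Q 1) := by have := hOG τ hτ _ _ hw2; rwa [hτf0] at this
  have hne : τ w ≠ τ (h w) := fun e => (Ne.symm hmove) (τ.injective e)
  have hγF1 : γ (F 1) = Q 1 := hγi 0 (by omega)
  have hx : O (γ (F 0)) (Q 1) := by
    have := hOG γ hγ _ _ (hF 0 (by omega)); rwa [hγF1] at this
  have hq0 : O (Q 0) (Q 1) := hQ 0 (by omega)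
  have hmemQ : ∀ {x : V}, O x (Q 1) → x ∈ outFin (fun a b => O b a) (Q 1) :=
    fun hx => mem_outFin.2 hx
  by_cases hcase : γ (F 0) = Q 0
  · refine hnot γ hγ (fun i hi => ?_)
    rcases Nat.eq_zero_or_pos i with rfl | h'
    · exact hcase
    · obtain ⟨j, rfl⟩ : ∃ j, i = j + 1 := ⟨i - 1, by omega⟩
      exact hγi j (by omega)
  · have hmm := two_mem (hin (Q 1)) (hmemQ hQs) (hmemQ hQs2) (hmemQ hx) hne
    have hmm2 := two_mem (hin (Q 1)) (hmemQ hQs) (hmemQ hQs2) (hmemQ hq0) hne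
    have hkey : δ (γ (F 0)) = Q 0 := by
      rcases hmm with e | e <;> rcases hmm2 with e2 | e2
      · exact absurd (e.trans e2.symm) hcase
      · rw [e, hδw, ← e2]
      · rw [e, hδw2, ← e2]
      · exact absurd (e.trans e2.symm) hcase
    refine hnot (δ * γ) (mul_mem hδG hγ) (fun i hi => ?_)
    rcases Nat.eq_zero_or_pos i with rfl | h'
    · exact hkey
    · obtain ⟨j, rfl⟩ : ∃ j, i = j + 1 := ⟨i - 1, by omega⟩
      show δ (γ (F (j+1))) = Q (j+1)
      rw [hγi j (by omega), hδfix j (by omega)]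

lemma fix_all {V : Type*} [Fintype V] (Γ : SimpleGraph V)
    (hconn : Γ.Connected) (O : V → V → Prop) (s : ℕ)
    (hO1 : ∀ u v : V, Γ.Adj u v ↔ (O u v ∨ O v u))
    (hex_out : ∀ v : V, ∃ w, O v w) (hex_in : ∀ v : V, ∃ w, O w v)
    (γ : Equiv.Perm V)
    (hfwd : ∀ f : ℕ → V, (∀ i < s, O (f i) (f (i+1))) →
      (∀ i ≤ s, γ (f i) = f i) → ∀ w, O (f s) w → γ w = w)
    (hbwd : ∀ f : ℕ → V, (∀ i < s, O (f i) (f (i+1))) →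
      (∀ i ≤ s, γ (f i) = f i) → ∀ w, O w (f 0) → γ w = w)
    (f : ℕ → V) (harc : ∀ i < s, O (f i) (f (i+1))) (hfx : ∀ i ≤ s, γ (f i) = f i) :
    ∀ v, γ v = v := by
  classical
  set S : V → Prop := fun v =>
    ∃ g : ℕ → V, (∀ i < s, O (g i) (g (i+1))) ∧ (∀ i ≤ s, γ (g i) = g i) ∧ ∃ j ≤ s, g j = v
    with hSdef
  have bshift : ∀ (g : ℕ → V) (w : V), (∀ i < s, O (g i) (g (i+1))) → (∀ i ≤ s, γ (g i) = g i) →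
      O w (g 0) →
      (∀ i < s, O ((fun n => if n = 0 then w else g (n-1)) i)
        ((fun n => if n = 0 then w else g (n-1)) (i+1))) ∧
      (∀ i ≤ s, γ ((fun n => if n = 0 then w else g (n-1)) i)
        = (fun n => if n = 0 then w else g (n-1)) i) := by
    intro g w harc hfx hw
    constructor
    · intro i hi
      by_cases h0 : i = 0
      · subst h0
        simpa using hw
      · simp only [if_neg h0, if_neg (by omega : ¬ i + 1 = 0)]
        have h1 : O (g (i-1)) (g (i-1+1)) := harc (i-1) (by omega)
        have e : i - 1 + 1 = i := by omega
        rw [e] at h1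
        have e2 : i + 1 - 1 = i := by omega
        rwa [e2]
    · intro i hi
      by_cases h0 : i = 0
      · subst h0
        simpa using hbwd g harc hfx w hw
      · simp only [if_neg h0]
        exact hfx (i-1) (by omega)
  have fshift : ∀ (g : ℕ → V) (w : V), (∀ i < s, O (g i) (g (i+1))) → (∀ i ≤ s, γ (g i) = g i) →
      O (g s) w →
      (∀ i < s, O ((fun n => if n = s then w else g (n+1)) i)
        ((fun n => if n = s then w else g (n+1)) (i+1))) ∧
      (∀ i ≤ s, γ ((fun n => if n = s then w else g (n+1)) i)
        = (fun n => if n = s then w else g (n+1)) i) := by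
    intro g w harc hfx hw
    constructor
    · intro i hi
      simp only [if_neg (by omega : ¬ i = s)]
      by_cases h1 : i + 1 = s
      · simp only [if_pos h1]
        rw [h1]
        exact hw
      · simp only [if_neg h1]
        exact harc (i+1) (by omega)
    · intro i hi
      by_cases h1 : i = s
      · simp only [if_pos h1]
        exact hfwd g harc hfx w hw
      · simp only [if_neg h1]
        exact hfx (i+1) (by omega)
  have toEnd : ∀ v, S v → ∃ g : ℕ → V, (∀ i < s, O (g i) (g (i+1))) ∧ (∀ i ≤ s, γ (g i) = g i)
      ∧ g s = v := by
    intro v hv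
    obtain ⟨g, harc', hfx', j, hj, hgj⟩ := hv
    have H : ∀ k : ℕ, ∀ (g : ℕ → V) (j : ℕ), (∀ i < s, O (g i) (g (i+1))) →
        (∀ i ≤ s, γ (g i) = g i) → j ≤ s → g j = v → j + k = s →
        ∃ g' : ℕ → V, (∀ i < s, O (g' i) (g' (i+1))) ∧ (∀ i ≤ s, γ (g' i) = g' i) ∧ g' s = v := by
      intro k
      induction k with
      | zero =>
        intro g j h1 h2 h3 h4 h5
        exact ⟨g, h1, h2, by rw [show s = j by omega]; exact h4⟩
      | succ k ih =>
        intro g j h1 h2 h3 h4 h5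
        obtain ⟨w, hw⟩ := hex_in (g 0)
        obtain ⟨hb1, hb2⟩ := bshift g w h1 h2 hw
        refine ih _ (j+1) hb1 hb2 (by omega) ?_ (by omega)
        simp only [if_neg (by omega : ¬ j + 1 = 0), Nat.add_sub_cancel]
        exact h4
    exact H (s - j) g j harc' hfx' hj hgj (by omega)
  have toStart : ∀ v, S v → ∃ g : ℕ → V, (∀ i < s, O (g i) (g (i+1))) ∧ (∀ i ≤ s, γ (g i) = g i)
      ∧ g 0 = v := by
    intro v hv
    obtain ⟨g, harc', hfx', j, hj, hgj⟩ := hv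
    have H : ∀ k : ℕ, ∀ (g : ℕ → V) (j : ℕ), (∀ i < s, O (g i) (g (i+1))) →
        (∀ i ≤ s, γ (g i) = g i) → j ≤ s → g j = v → j = k →
        ∃ g' : ℕ → V, (∀ i < s, O (g' i) (g' (i+1))) ∧ (∀ i ≤ s, γ (g' i) = g' i) ∧ g' 0 = v := by
      intro k
      induction k with
      | zero =>
        intro g j h1 h2 h3 h4 h5
        exact ⟨g, h1, h2, by rw [show (0:ℕ) = j by omega]; exact h4⟩
      | succ k ih =>
        intro g j h1 h2 h3 h4 h5
        obtain ⟨w, hw⟩ := hex_out (g s)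
        obtain ⟨hb1, hb2⟩ := fshift g w h1 h2 hw
        refine ih _ (j-1) hb1 hb2 (by omega) ?_ (by omega)
        simp only [if_neg (by omega : ¬ j - 1 = s)]
        rw [show j - 1 + 1 = j by omega]
        exact h4
    exact H j g j harc' hfx' hj hgj rfl
  have step : ∀ a b, Γ.Adj a b → S a → S b := by
    intro a b hab hSa
    rcases (hO1 a b).1 hab with h | h
    · obtain ⟨g, h1, h2, hgs⟩ := toEnd a hSa
      have hw : O (g s) b := by rw [hgs]; exact h
      obtain ⟨hb1, hb2⟩ := fshift g b h1 h2 hw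
      exact ⟨_, hb1, hb2, s, le_rfl, by simp⟩
    · obtain ⟨g, h1, h2, hg0⟩ := toStart a hSa
      have hw : O b (g 0) := by rw [hg0]; exact h
      obtain ⟨hb1, hb2⟩ := bshift g b h1 h2 hw
      exact ⟨_, hb1, hb2, 0, by omega, by simp⟩
  have hS0 : S (f 0) := ⟨f, harc, hfx, 0, by omega, rfl⟩
  have hall : ∀ u w, Γ.Walk u w → S u → S w := by
    intro u w p
    induction p with
    | nil => exact id
    | cons h p ih => exact fun hu => ih (step _ _ h hu)
  intro v
  have hSv : S v := hall _ _ ((hconn (f 0) v).some) hS0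
  obtain ⟨g, _, hfx', j, hj, rfl⟩ := hSv
  exact hfx' j hj

/-- `p` is an oriented `s`-arc with respect to the orientation `O`. -/
def IsOrientedArc {V : Type*} (O : V → V → Prop) (s : ℕ) (p : Fin (s + 1) → V) : Prop :=
  ∀ i : Fin s, O (p i.castSucc) (p i.succ)

theorem stmt_2 {V : Type*} [Fintype V] (Γ : SimpleGraph V) [DecidableRel Γ.Adj]
    (hconn : Γ.Connected) (hval : ∀ v : V, Γ.degree v = 4)
    (G : Subgroup (Equiv.Perm V))
    (hAut : ∀ g ∈ G, ∀ u v : V, Γ.Adj (g u) (g v) ↔ Γ.Adj u v)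
    (hVT : ∀ u v : V, ∃ g ∈ G, g u = v)
    (hET : ∀ a b c d : V, Γ.Adj a b → Γ.Adj c d →
      ∃ g ∈ G, (g a = c ∧ g b = d) ∨ (g a = d ∧ g b = c))
    (hnAT : ¬ ∀ a b c d : V, Γ.Adj a b → Γ.Adj c d → ∃ g ∈ G, g a = c ∧ g b = d)
    -- a G-invariant orientation of the edges
    (O : V → V → Prop)
    (hO1 : ∀ u v : V, Γ.Adj u v ↔ (O u v ∨ O v u))
    (hO2 : ∀ u v : V, O u v → ¬ O v u)
    (hOG : ∀ g ∈ G, ∀ u v : V, O u v → O (g u) (g v))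
    -- s is the largest integer such that G is transitive on oriented s-arcs
    (s : ℕ) (hs : 1 ≤ s)
    (htrans : ∀ p q : Fin (s + 1) → V, IsOrientedArc O s p → IsOrientedArc O s q →
      ∃ g ∈ G, ∀ i, g (p i) = q i)
    (hmax : ¬ ∀ p q : Fin (s + 2) → V, IsOrientedArc O (s + 1) p → IsOrientedArc O (s + 1) q →
      ∃ g ∈ G, ∀ i, g (p i) = q i) :
    -- G acts regularly on the oriented s-arcs
    ∀ p q : Fin (s + 1) → V, IsOrientedArc O s p → IsOrientedArc O s q →
      ∃! g : G, ∀ i, (g : Equiv.Perm V) (p i) = q i := by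
  classical
  have htransN : ∀ f g : ℕ → V, (∀ i < s, O (f i) (f (i+1))) → (∀ i < s, O (g i) (g (i+1))) →
      ∃ γ ∈ G, ∀ i ≤ s, γ (f i) = g i := by
    intro f g hf hg
    have hf' : IsOrientedArc O s (fun i : Fin (s+1) => f i) := fun i => hf i.1 i.2
    have hg' : IsOrientedArc O s (fun i : Fin (s+1) => g i) := fun i => hg i.1 i.2
    obtain ⟨γ, hγ, h⟩ := htrans _ _ hf' hg'
    exact ⟨γ, hγ, fun i hi => h ⟨i, by omega⟩⟩
  have hmaxN : ∃ F Q : ℕ → V, (∀ i < s+1, O (F i) (F (i+1))) ∧ (∀ i < s+1, O (Q i) (Q (i+1))) ∧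
      ∀ γ ∈ G, ¬ ∀ i ≤ s+1, γ (F i) = Q i := by
    by_contra hcon
    push_neg at hcon
    apply hmax
    intro p q hp hq
    set F : ℕ → V := fun n => p ⟨min n (s+1), by omega⟩ with hFdef
    set Q : ℕ → V := fun n => q ⟨min n (s+1), by omega⟩ with hQdef
    have hFv : ∀ n (hn : n ≤ s+1), F n = p ⟨n, by omega⟩ := by
      intro n hn
      have : (⟨min n (s+1), by omega⟩ : Fin (s+2)) = ⟨n, by omega⟩ :=
        Fin.ext (Nat.min_eq_left hn)
      simp only [hFdef, this]
    have hQv : ∀ n (hn : n ≤ s+1), Q n = q ⟨n, by omega⟩ := by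
      intro n hn
      have : (⟨min n (s+1), by omega⟩ : Fin (s+2)) = ⟨n, by omega⟩ :=
        Fin.ext (Nat.min_eq_left hn)
      simp only [hQdef, this]
    obtain ⟨γ, hγ, hγi⟩ := hcon F Q
      (fun i hi => by rw [hFv i (by omega), hFv (i+1) (by omega)]; exact hp ⟨i, hi⟩)
      (fun i hi => by rw [hQv i (by omega), hQv (i+1) (by omega)]; exact hq ⟨i, hi⟩)
    refine ⟨γ, hγ, fun i => ?_⟩
    have := hγi i.1 (by omega)
    rw [hFv i.1 (by omega), hQv i.1 (by omega)] at this
    exact this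
  have hdeg := degree_two Γ hconn hval G hVT O hO1 hO2 hOG
  have hout : ∀ v : V, (outFin O v).card = 2 := fun v => (hdeg v).1
  have hin : ∀ v : V, (outFin (fun a b => O b a) v).card = 2 := fun v => (hdeg v).2
  have hex_out : ∀ v : V, ∃ w, O v w := by
    intro v
    have : (outFin O v).Nonempty := Finset.card_pos.1 (by rw [hout v]; omega)
    obtain ⟨w, hw⟩ := this
    exact ⟨w, mem_outFin.1 hw⟩
  have hex_in : ∀ v : V, ∃ w, O w v := by
    intro v
    have : (outFin (fun a b => O b a) v).Nonempty := Finset.card_pos.1 (by rw [hin v]; omega)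
    obtain ⟨w, hw⟩ := this
    exact ⟨w, (mem_outFin (O := fun a b => O b a)).1 hw⟩
  have hfwd := swap_fwd G O s hOG hout htransN hmaxN
  have hbwd := swap_bwd G O s hOG hin htransN hmaxN
  intro p q hp hq
  obtain ⟨g, hgG, hgi⟩ := htrans p q hp hq
  refine ⟨⟨g, hgG⟩, hgi, ?_⟩
  intro y hy
  set γ : Equiv.Perm V := g⁻¹ * (y : Equiv.Perm V) with hγdef
  have hγG : γ ∈ G := mul_mem (inv_mem hgG) y.2
  set f : ℕ → V := fun n => p ⟨min n s, by omega⟩ with hfdef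
  have hfv : ∀ n (hn : n ≤ s), f n = p ⟨n, by omega⟩ := by
    intro n hn
    have e : (⟨min n s, by omega⟩ : Fin (s+1)) = ⟨n, by omega⟩ := Fin.ext (Nat.min_eq_left hn)
    simp only [hfdef, e]
  have hyg : ∀ j : Fin (s+1), γ (p j) = p j := by
    intro j
    show (g⁻¹ * (y : Equiv.Perm V)) (p j) = p j
    rw [Equiv.Perm.mul_apply, hy j, ← hgi j]
    simp
  have harcf : ∀ i < s, O (f i) (f (i+1)) := by
    intro i hi
    rw [hfv i (by omega), hfv (i+1) (by omega)]
    exact hp ⟨i, hi⟩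
  have hfixf : ∀ i ≤ s, γ (f i) = f i := by
    intro i hi
    rw [hfv i hi]
    exact hyg ⟨i, by omega⟩
  have hid := fix_all Γ hconn O s hO1 hex_out hex_in γ (hfwd γ hγG) (hbwd γ hγG) f harcf hfixf
  apply Subtype.ext
  apply Equiv.ext
  intro x
  have h2 := hid x
  rw [hγdef, Equiv.Perm.mul_apply] at h2
  simpa using congrArg g h2
end

section
/- Let (Γ, G) ∈ OG(4), i.e. Γ is connected, 4-valent and G-oriented. Then the stabilizer in G of any vertex of Γ is a 2-group. -/
/-!
The `G`-orbit of one arc orients `Γ`: edge-transitivity puts every edge into it in some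
direction, and never in both, since an element of `G` reversing an arc would make `G`
arc-transitive. Vertex-transitivity makes out- and in-degrees constant, and double counting
arcs makes them equal, so both are `2`. An element of odd order fixing a vertex permutes its
two out-neighbours and its two in-neighbours, so it fixes them too; by connectedness it is
trivial. Hence every element of `G_v` has `2`-power order.
-/

open Finset

lemma isPGroup_of_forall_not_dvd_orderOf {H : Type*} [Group H] [Finite H] {p : ℕ} (hp : p ≠ 1)
    (h : ∀ g : H, ¬ p ∣ orderOf g → g = 1) : IsPGroup p H := by
  intro g
  obtain ⟨e, m, hm, hord⟩ := Nat.exists_eq_pow_mul_and_not_dvd (orderOf_pos g).ne' p hp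
  have hpe : p ^ e ≠ 0 := left_ne_zero_of_mul (hord ▸ (orderOf_pos g).ne')
  refine ⟨e, h _ ?_⟩
  rwa [orderOf_pow_of_dvd hpe (hord ▸ dvd_mul_right _ _), hord,
    Nat.mul_div_cancel_left _ (Nat.pos_of_ne_zero hpe)]

lemma smul_eq_of_sq_smul_eq {G α : Type*} [Group G] [MulAction G α] {g : G} {a : α}
    (hg : Odd (orderOf g)) (ha : g ^ 2 • a = a) : g • a = a := by
  obtain ⟨m, hm⟩ := hg
  have hmem : g ∈ Subgroup.zpowers (g ^ 2) := ⟨(m + 1 : ℕ), by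
    simp only [zpow_natCast]
    rw [← pow_mul, show 2 * (m + 1) = orderOf g + 1 by omega, pow_succ,
      pow_orderOf_eq_one, one_mul]⟩
  exact smul_eq_self_of_mem_zpowers hmem ha

lemma apply_apply_eq_of_mapsTo_of_card_eq_two {α : Type*} {f : α → α}
    (hf : Function.Injective f) {s : Finset α} (hs : #s = 2) (hmaps : Set.MapsTo f s s)
    {a : α} (ha : a ∈ s) : f (f a) = a := by
  classical
  obtain ⟨p, q, hpq, rfl⟩ := card_eq_two.mp hs
  have hfpq := hf.ne hpq
  simp only [Set.MapsTo, coe_insert, coe_singleton, Set.mem_insert_iff, Set.mem_singleton_iff,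
    forall_eq_or_imp, forall_eq] at hmaps
  simp only [mem_insert, mem_singleton] at ha
  grind

section ArcOrbit

variable {V : Type*}

def arcOrbit (G : Subgroup (Equiv.Perm V)) (a b x y : V) : Prop :=
  ∃ g ∈ G, g a = x ∧ g b = y

variable {G : Subgroup (Equiv.Perm V)} {a b x y : V} {g : Equiv.Perm V}

lemma arcOrbit_apply (hg : g ∈ G) (h : arcOrbit G a b x y) : arcOrbit G a b (g x) (g y) := by
  obtain ⟨k, hk, rfl, rfl⟩ := h
  exact ⟨g * k, mul_mem hg hk, rfl, rfl⟩

lemma arcOrbit_apply_iff (hg : g ∈ G) : arcOrbit G a b (g x) (g y) ↔ arcOrbit G a b x y := by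
  refine ⟨fun h => ?_, arcOrbit_apply hg⟩
  simpa using arcOrbit_apply (inv_mem hg) h

end ArcOrbit

namespace SimpleGraph

variable {V : Type*} (Γ : SimpleGraph V) (G : Subgroup (Equiv.Perm V))

def IsEdgeTransitive : Prop :=
  ∀ a b c d : V, Γ.Adj a b → Γ.Adj c d → ∃ g ∈ G, (g a = c ∧ g b = d) ∨ (g a = d ∧ g b = c)

def IsArcTransitive : Prop :=
  ∀ a b c d : V, Γ.Adj a b → Γ.Adj c d → ∃ g ∈ G, g a = c ∧ g b = d

structure IsOrientation (D : V → V → Prop) : Prop where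
  adj_of_rel {x y : V} : D x y → Γ.Adj x y
  rel_or_rel_of_adj {x y : V} : Γ.Adj x y → D x y ∨ D y x
  not_rel_of_rel {x y : V} : D x y → ¬ D y x

variable {Γ G} {a b : V}

theorem Preconnected.forall_of_adj (hΓ : Γ.Preconnected) {P : V → Prop}
    (hP : ∀ x y, Γ.Adj x y → P x → P y) {v : V} (hv : P v) (u : V) : P u := by
  induction (Γ.reachable_iff_reflTransGen v u).1 (hΓ v u) with
  | refl => exact hv
  | tail _ hadj ih => exact hP _ _ hadj ih

theorem IsEdgeTransitive.isArcTransitive_of_arcOrbit_swap (hET : Γ.IsEdgeTransitive G)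
    (hab : Γ.Adj a b) (hswap : arcOrbit G a b b a) : Γ.IsArcTransitive G := by
  have hall : ∀ c d, Γ.Adj c d → arcOrbit G a b c d := by
    intro c d hcd
    obtain ⟨g, hg, ⟨rfl, rfl⟩ | ⟨rfl, rfl⟩⟩ := hET a b c d hab hcd
    · exact ⟨g, hg, rfl, rfl⟩
    · exact arcOrbit_apply hg hswap
  intro c d e f hcd hef
  obtain ⟨g, hg, rfl, rfl⟩ := hall c d hcd
  obtain ⟨k, hk, rfl, rfl⟩ := hall e f hef
  exact ⟨k * g⁻¹, mul_mem hk (inv_mem hg), by simp, by simp⟩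

theorem isOrientation_arcOrbit (hAut : ∀ g ∈ G, ∀ u v : V, Γ.Adj (g u) (g v) ↔ Γ.Adj u v)
    (hET : Γ.IsEdgeTransitive G) (hnAT : ¬ Γ.IsArcTransitive G) (hab : Γ.Adj a b) :
    Γ.IsOrientation (arcOrbit G a b) where
  adj_of_rel := by
    rintro _ _ ⟨g, hg, rfl, rfl⟩
    exact (hAut g hg a b).2 hab
  rel_or_rel_of_adj {x y} hxy := by
    obtain ⟨g, hg, ⟨hga, hgb⟩ | ⟨hga, hgb⟩⟩ := hET a b x y hab hxy
    · exact .inl ⟨g, hg, hga, hgb⟩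
    · exact .inr ⟨g, hg, hga, hgb⟩
  not_rel_of_rel := by
    rintro _ _ ⟨g, hg, rfl, rfl⟩ ⟨k, hk, hka, hkb⟩
    exact hnAT <| hET.isArcTransitive_of_arcOrbit_swap hab
      ⟨g⁻¹ * k, mul_mem (inv_mem hg) hk, by simp [hka], by simp [hkb]⟩

end SimpleGraph

section Balanced

variable {V : Type*} [Fintype V] {G : Subgroup (Equiv.Perm V)} {D : V → V → Prop}
  [DecidableRel D]

lemma card_rel_eq_card_rel_swap (hD : ∀ g ∈ G, ∀ x y, D (g x) (g y) ↔ D x y)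
    (hVT : ∀ u v : V, ∃ g ∈ G, g u = v) (x : V) : #{y | D x y} = #{y | D y x} := by
  have hout : ∀ u, #{y | D u y} = #{y | D x y} := fun u => by
    obtain ⟨g, hg, rfl⟩ := hVT x u
    exact (card_equiv g fun y => by simp [hD g hg]).symm
  have hin : ∀ u, #{y | D y u} = #{y | D y x} := fun u => by
    obtain ⟨g, hg, rfl⟩ := hVT x u
    exact (card_equiv g fun y => by simp [hD g hg]).symm
  have hsum : ∑ u, #{y | D u y} = ∑ u, #{y | D y u} := by
    simp only [card_filter]
    exact sum_comm
  simp only [hout, hin, sum_const, smul_eq_mul] at hsum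
  exact Nat.eq_of_mul_eq_mul_left (card_pos.2 ⟨x, mem_univ x⟩) hsum

end Balanced

namespace SimpleGraph.IsOrientation

variable {V : Type*} {Γ : SimpleGraph V} {D : V → V → Prop}

theorem card_add_card_eq_degree [Fintype V] [DecidableRel Γ.Adj] [DecidableRel D]
    (hD : Γ.IsOrientation D) (x : V) : #{y | D x y} + #{y | D y x} = Γ.degree x := by
  classical
  rw [← card_neighborFinset_eq_degree, ← card_union_of_disjoint]
  · congr 1
    ext y
    simp only [mem_union, mem_filter_univ, mem_neighborFinset]
    exact ⟨fun h => h.elim hD.adj_of_rel fun h => (hD.adj_of_rel h).symm, hD.rel_or_rel_of_adj⟩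
  · exact disjoint_filter.2 fun y _ => hD.not_rel_of_rel

variable [Fintype V] [DecidableRel D]

theorem apply_eq_self_of_adj (hD : Γ.IsOrientation D) (hout : ∀ x, #{y | D x y} = 2)
    (hin : ∀ x, #{y | D y x} = 2) {h : Equiv.Perm V} (hh : ∀ x y, D x y → D (h x) (h y))
    (hodd : Odd (orderOf h)) {x w : V} (hx : h x = x) (hxw : Γ.Adj x w) : h w = w := by
  have hsq : h (h w) = w := by
    rcases hD.rel_or_rel_of_adj hxw with hw | hw
    · refine apply_apply_eq_of_mapsTo_of_card_eq_two h.injective (hout x) (fun y hy => ?_)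
        (by simpa using hw)
      have hxy := hh x y (by simpa using hy)
      rw [hx] at hxy
      simpa using hxy
    · refine apply_apply_eq_of_mapsTo_of_card_eq_two h.injective (hin x) (fun y hy => ?_)
        (by simpa using hw)
      have hyx := hh y x (by simpa using hy)
      rw [hx] at hyx
      simpa using hyx
  exact smul_eq_of_sq_smul_eq hodd (by rw [sq]; exact hsq)

theorem eq_one_of_odd_orderOf (hD : Γ.IsOrientation D) (hΓ : Γ.Preconnected)
    (hout : ∀ x, #{y | D x y} = 2) (hin : ∀ x, #{y | D y x} = 2) {h : Equiv.Perm V}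
    (hh : ∀ x y, D x y → D (h x) (h y)) (hodd : Odd (orderOf h)) {v : V} (hv : h v = v) :
    h = 1 :=
  Equiv.ext <| hΓ.forall_of_adj (P := fun x => h x = x)
    (fun _ _ hxw hx => hD.apply_eq_self_of_adj hout hin hh hodd hx hxw) hv

end SimpleGraph.IsOrientation

theorem stmt_3 {V : Type*} [Fintype V] (Γ : SimpleGraph V) [DecidableRel Γ.Adj]
    (hconn : Γ.Connected) (hval : ∀ v : V, Γ.degree v = 4)
    (G : Subgroup (Equiv.Perm V))
    (hAut : ∀ g ∈ G, ∀ u v : V, Γ.Adj (g u) (g v) ↔ Γ.Adj u v)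
    (hVT : ∀ u v : V, ∃ g ∈ G, g u = v)
    (hET : ∀ a b c d : V, Γ.Adj a b → Γ.Adj c d →
      ∃ g ∈ G, (g a = c ∧ g b = d) ∨ (g a = d ∧ g b = c))
    (hnAT : ¬ ∀ a b c d : V, Γ.Adj a b → Γ.Adj c d → ∃ g ∈ G, g a = c ∧ g b = d)
    (v : V) :
    IsPGroup 2 ↥(G ⊓ MulAction.stabilizer (Equiv.Perm V) v) := by
  classical
  obtain ⟨b, hvb⟩ := (Γ.degree_pos_iff_exists_adj v).mp (by rw [hval v]; norm_num)
  have hD := SimpleGraph.isOrientation_arcOrbit hAut hET hnAT hvb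
  have hinv : ∀ g ∈ G, ∀ x y, arcOrbit G v b (g x) (g y) ↔ arcOrbit G v b x y :=
    fun _ hg _ _ => arcOrbit_apply_iff hg
  have hbal := card_rel_eq_card_rel_swap hinv hVT
  have hout : ∀ x, #{y | arcOrbit G v b x y} = 2 := fun x => by
    have := hD.card_add_card_eq_degree x
    rw [hval, ← hbal] at this
    omega
  refine isPGroup_of_forall_not_dvd_orderOf (by norm_num) fun g hodd => ?_
  obtain ⟨hgG, hgv⟩ := Subgroup.mem_inf.mp g.2
  rw [← Subgroup.orderOf_coe, Nat.two_dvd_ne_zero, ← Nat.odd_iff] at hodd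
  exact Subtype.ext <| hD.eq_one_of_odd_orderOf hconn.preconnected hout
    (fun x => (hbal x).symm.trans (hout x)) (fun x y => (hinv g hgG x y).2) hodd hgv
end

section
/- Let (Γ, G) ∈ OG(4) be basic of biquasiprimitive type with bipartition {Δ, Δ′} preserved by the index-2 subgroup G⁺ of G. Then any nontrivial intransitive normal subgroup N of G has exactly the two orbits Δ and Δ′ on the vertex set; in particular N ≤ G⁺. -/
/-!
The orbits of a normal subgroup `N` of `G` are permuted by `G`; as `N` is intransitive with at most
two orbits, it has exactly two. A walk between them in the connected graph `Γ` crosses from one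
orbit to the other along some edge, so by edge-transitivity every edge does: the two orbits
properly 2-colour `Γ`. So do `Δ` and `Δ'`, and a connected graph has only one proper 2-colouring
up to swapping the colours.
-/

namespace SimpleGraph

variable {V : Type*} {Γ : SimpleGraph V}

theorem Connected.rel_of_forall_adj (hconn : Γ.Connected) {R : V → V → Prop}
    (hrefl : ∀ a, R a a) (htrans : ∀ {a b c}, R a b → R b c → R a c)
    (hadj : ∀ ⦃u v⦄, Γ.Adj u v → R u v) (a b : V) : R a b := by
  induction (reachable_iff_reflTransGen a b).1 (hconn a b) with
  | refl => exact hrefl a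
  | tail _ huv ih => exact htrans ih (hadj huv)

theorem Connected.exists_adj_not_rel (hconn : Γ.Connected) {R : V → V → Prop}
    (hrefl : ∀ a, R a a) (htrans : ∀ {a b c}, R a b → R b c → R a c)
    (hR : ¬ ∀ a b, R a b) : ∃ u v, Γ.Adj u v ∧ ¬ R u v := by
  by_contra! hadj
  exact hR (hconn.rel_of_forall_adj hrefl htrans hadj)

theorem Connected.iff_iff_of_alternating (hconn : Γ.Connected) {P Q : V → Prop}
    (hP : ∀ ⦃u v⦄, Γ.Adj u v → ¬ (P u ↔ P v)) (hQ : ∀ ⦃u v⦄, Γ.Adj u v → ¬ (Q u ↔ Q v))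
    (a b : V) : (P a ↔ P b) ↔ (Q a ↔ Q b) := by
  classical
  let cP : Γ.Coloring Bool :=
    Coloring.mk (fun v => decide (P v)) fun huv => by simpa using hP huv
  let cQ : Γ.Coloring Bool :=
    Coloring.mk (fun v => decide (Q v)) fun huv => by simpa using hQ huv
  have w := (hconn a b).some
  have hP' := cP.even_length_iff_congr w
  have hQ' := cQ.even_length_iff_congr w
  simp only [cP, cQ, Coloring.mk, RelHom.coeFn_mk, decide_eq_true_eq] at hP' hQ'
  rw [← hP', ← hQ']

theorem not_rel_of_adj_of_edge_transitive {G : Set (Equiv.Perm V)} {R : V → V → Prop}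
    (hsymm : ∀ ⦃a b⦄, R a b → R b a) (hinv : ∀ g ∈ G, ∀ ⦃a b⦄, R a b → R (g a) (g b))
    (hET : ∀ a b c d : V, Γ.Adj a b → Γ.Adj c d →
      ∃ g ∈ G, (g a = c ∧ g b = d) ∨ (g a = d ∧ g b = c))
    {c d : V} (hcd : Γ.Adj c d) (hncd : ¬ R c d) {a b : V} (hab : Γ.Adj a b) : ¬ R a b := by
  intro hR
  obtain ⟨g, hg, ⟨rfl, rfl⟩ | ⟨rfl, rfl⟩⟩ := hET a b c d hab hcd
  · exact hncd (hinv g hg hR)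
  · exact hncd (hsymm (hinv g hg hR))

end SimpleGraph

theorem Equivalence.rel_iff_iff_of_two_classes {α : Type*} {R : α → α → Prop}
    (hR : Equivalence R) (hntriv : ¬ ∀ a b, R a b) {x y : α} (hcover : ∀ z, R x z ∨ R y z)
    (u v : α) : R u v ↔ (R x u ↔ R x v) := by
  have hxy : ¬ R x y := fun hxy => hntriv fun a b =>
    have hx : ∀ z, R x z := fun z => (hcover z).elim id (hR.trans hxy)
    hR.trans (hR.symm (hx a)) (hx b)
  refine ⟨fun huv => ⟨fun hxu => hR.trans hxu huv, fun hxv => hR.trans hxv (hR.symm huv)⟩,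
    fun hiff => ?_⟩
  rcases hcover u with hxu | hyu
  · exact hR.trans (hR.symm hxu) (hiff.1 hxu)
  rcases hcover v with hxv | hyv
  · exact absurd (hR.trans (hiff.2 hxv) (hR.symm hyu)) hxy
  · exact hR.trans (hR.symm hyu) hyv

namespace Equiv.Perm

variable {V : Type*}

def SameOrbit (N : Subgroup (Equiv.Perm V)) (a b : V) : Prop := ∃ n ∈ N, n a = b

theorem SameOrbit.equivalence (N : Subgroup (Equiv.Perm V)) : Equivalence (SameOrbit N) where
  refl _ := ⟨1, N.one_mem, rfl⟩
  symm := by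
    rintro a _ ⟨n, hn, rfl⟩
    exact ⟨n⁻¹, N.inv_mem hn, by simp⟩
  trans := by
    rintro a _ _ ⟨n, hn, rfl⟩ ⟨m, hm, rfl⟩
    exact ⟨m * n, N.mul_mem hm hn, rfl⟩

theorem SameOrbit.apply_of_normalizes {N : Subgroup (Equiv.Perm V)} {g : Equiv.Perm V}
    (hg : ∀ n ∈ N, g * n * g⁻¹ ∈ N) {a b : V} (h : SameOrbit N a b) :
    SameOrbit N (g a) (g b) := by
  obtain ⟨n, hn, rfl⟩ := h
  exact ⟨g * n * g⁻¹, hg n hn, by simp [mul_apply]⟩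

end Equiv.Perm

theorem stmt_6_general {V : Type*} (Γ : SimpleGraph V)
    (hconn : Γ.Connected)
    (G : Subgroup (Equiv.Perm V))
    (hET : ∀ a b c d : V, Γ.Adj a b → Γ.Adj c d →
      ∃ g ∈ G, (g a = c ∧ g b = d) ∨ (g a = d ∧ g b = c))
    -- the bipartition {Δ, Δ′}
    (Δ Δ' : Set V) (hdisj : Disjoint Δ Δ') (hcover : Δ ∪ Δ' = Set.univ)
    (hbip : ∀ u v : V, Γ.Adj u v → ((u ∈ Δ ∧ v ∈ Δ') ∨ (u ∈ Δ' ∧ v ∈ Δ)))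
    -- G⁺ is the index-2 subgroup of G fixing the two biparts setwise
    (Gp : Subgroup (Equiv.Perm V))
    (hGp : ∀ g : Equiv.Perm V, g ∈ Gp ↔ (g ∈ G ∧ ∀ x ∈ Δ, g x ∈ Δ))
    -- basic of biquasiprimitive type: every nontrivial normal subgroup of G has
    -- at most two orbits on vertices
    (hbqp : ∀ M : Subgroup (Equiv.Perm V), M ≤ G → (∀ g ∈ G, ∀ m ∈ M, g * m * g⁻¹ ∈ M) →
      M ≠ ⊥ → ∃ x y : V, ∀ z : V, (∃ m ∈ M, m x = z) ∨ (∃ m ∈ M, m y = z))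
    -- N is a nontrivial intransitive normal subgroup of G
    (N : Subgroup (Equiv.Perm V)) (hNG : N ≤ G)
    (hNnorm : ∀ g ∈ G, ∀ n ∈ N, g * n * g⁻¹ ∈ N)
    (hNne : N ≠ ⊥)
    (hNintrans : ¬ ∀ x y : V, ∃ n ∈ N, n x = y) :
    -- the orbits of N are exactly Δ and Δ′, and N ≤ G⁺
    (∀ x y : V, (∃ n ∈ N, n x = y) ↔ ((x ∈ Δ ∧ y ∈ Δ) ∨ (x ∈ Δ' ∧ y ∈ Δ'))) ∧
    N ≤ Gp := by
  have hR := Equiv.Perm.SameOrbit.equivalence N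
  obtain ⟨x, y, hxy⟩ := hbqp N hNG hNnorm hNne
  have hsides := hR.rel_iff_iff_of_two_classes hNintrans hxy
  obtain ⟨c, d, hcd, hncd⟩ := hconn.exists_adj_not_rel hR.refl hR.trans hNintrans
  have hcross : ∀ ⦃u v⦄, Γ.Adj u v → ¬ Equiv.Perm.SameOrbit N u v := fun _ _ huv =>
    SimpleGraph.not_rel_of_adj_of_edge_transitive (R := Equiv.Perm.SameOrbit N)
      (fun _ _ => hR.symm) (fun g hg _ _ => .apply_of_normalizes (hNnorm g hg)) hET hcd hncd huv
  obtain rfl : Δ' = Δᶜ := (IsCompl.compl_eq ⟨hdisj, codisjoint_iff.2 hcover⟩).symm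
  have horbit : ∀ u v, Equiv.Perm.SameOrbit N u v ↔ (u ∈ Δ ↔ v ∈ Δ) := fun u v => by
    refine (hsides u v).trans
      (hconn.iff_iff_of_alternating (fun _ _ huv => ?_) (fun _ _ huv => ?_) u v)
    · exact (hsides _ _).not.1 (hcross huv)
    · have := hbip _ _ huv
      simp only [Set.mem_compl_iff] at this
      tauto
  refine ⟨fun u v => (horbit u v).trans ?_, fun n hn => (hGp n).2 ⟨hNG hn, fun z hz => ?_⟩⟩
  · simp only [Set.mem_compl_iff]
    tauto
  · exact ((horbit z (n z)).1 ⟨n, hn, rfl⟩).1 hz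

theorem stmt_6 {V : Type*} [Fintype V] (Γ : SimpleGraph V) [DecidableRel Γ.Adj]
    (hcard : 5 ≤ Fintype.card V)
    (hconn : Γ.Connected) (hval : ∀ v : V, Γ.degree v = 4)
    (G : Subgroup (Equiv.Perm V))
    (hAut : ∀ g ∈ G, ∀ u v : V, Γ.Adj (g u) (g v) ↔ Γ.Adj u v)
    (hVT : ∀ u v : V, ∃ g ∈ G, g u = v)
    (hET : ∀ a b c d : V, Γ.Adj a b → Γ.Adj c d →
      ∃ g ∈ G, (g a = c ∧ g b = d) ∨ (g a = d ∧ g b = c))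
    (hnAT : ¬ ∀ a b c d : V, Γ.Adj a b → Γ.Adj c d → ∃ g ∈ G, g a = c ∧ g b = d)
    -- the bipartition {Δ, Δ′}
    (Δ Δ' : Set V) (hdisj : Disjoint Δ Δ') (hcover : Δ ∪ Δ' = Set.univ)
    (hbip : ∀ u v : V, Γ.Adj u v → ((u ∈ Δ ∧ v ∈ Δ') ∨ (u ∈ Δ' ∧ v ∈ Δ)))
    -- G⁺ is the index-2 subgroup of G fixing the two biparts setwise
    (Gp : Subgroup (Equiv.Perm V)) (hGpG : Gp ≤ G) (hindex : Gp.relIndex G = 2)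
    (hGp : ∀ g : Equiv.Perm V, g ∈ Gp ↔ (g ∈ G ∧ ∀ x ∈ Δ, g x ∈ Δ))
    -- basic of biquasiprimitive type: every nontrivial normal subgroup of G has
    -- at most two orbits on vertices
    (hbqp : ∀ M : Subgroup (Equiv.Perm V), M ≤ G → (∀ g ∈ G, ∀ m ∈ M, g * m * g⁻¹ ∈ M) →
      M ≠ ⊥ → ∃ x y : V, ∀ z : V, (∃ m ∈ M, m x = z) ∨ (∃ m ∈ M, m y = z))
    -- N is a nontrivial intransitive normal subgroup of G
    (N : Subgroup (Equiv.Perm V)) (hNG : N ≤ G)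
    (hNnorm : ∀ g ∈ G, ∀ n ∈ N, g * n * g⁻¹ ∈ N)
    (hNne : N ≠ ⊥)
    (hNintrans : ¬ ∀ x y : V, ∃ n ∈ N, n x = y) :
    -- the orbits of N are exactly Δ and Δ′, and N ≤ G⁺
    (∀ x y : V, (∃ n ∈ N, n x = y) ↔ ((x ∈ Δ ∧ y ∈ Δ) ∨ (x ∈ Δ' ∧ y ∈ Δ'))) ∧
    N ≤ Gp :=
  stmt_6_general Γ hconn G hET Δ Δ' hdisj hcover hbip Gp hGp hbqp N hNG hNnorm hNne hNintrans
end

section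
/- Let H be a group, φ ∈ Aut(H), y ∈ H, and let τ ∈ Sym(H × H-indexed set) act on H × H by swapping coordinates. If the element g = (y, 1)τ normalises the diagonal subgroup Diag_φ(H×H) = {(h, h^φ) : h ∈ H} inside H wr Sym(2), then φ² equals the inner automorphism of H induced by y. -/
/-- The permutation action of `Equiv.Perm Bool` on `Bool → H` as multiplicative
automorphisms (permuting the two coordinates of the base group of `H wr Sym(2)`). -/
def permHom (H : Type*) [Group H] : Equiv.Perm Bool →* MulAut (Bool → H) where
  toFun e :=
    { toEquiv := Equiv.arrowCongr e (Equiv.refl H)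
      map_mul' := fun _ _ => rfl }
  map_one' := by ext f b; rfl
  map_mul' := by intro e f; ext u b; rfl

/-- The wreath product `H wr Sym(2)`, realised as `(Bool → H) ⋊ Sym(Bool)`. -/
abbrev Wr (H : Type*) [Group H] := SemidirectProduct (Bool → H) (Equiv.Perm Bool) (permHom H)

/-- The element `(h, h^φ)` of the base group `H × H` of `H wr Sym(2)`
(coordinate `false` is the first entry, coordinate `true` the second). -/
def diagW {H : Type*} [Group H] (φ : MulAut H) (h : H) : Wr H :=
  ⟨fun b => bif b then φ h else h, 1⟩

/-- The element `g = (y, 1)·τ` of `H wr Sym(2)`, where `τ` is the coordinate swap. -/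
def gW {H : Type*} [Group H] (y : H) : Wr H :=
  ⟨fun b => bif b then 1 else y, Equiv.swap false true⟩

/-!
Conjugating `(a, b)` by `g = (y, 1)τ` gives `(b, y⁻¹ a y)`. Hence `g⁻¹ (h, h^φ) g = (h^φ, y⁻¹ h y)`,
and this lies in `Diag_φ(H×H)` exactly when `(h^φ)^φ = y⁻¹ h y`.
-/

section

variable {H : Type*} [Group H]

theorem gW_inv_mul_base_mul_gW (y : H) (f : Bool → H) :
    (gW y)⁻¹ * (⟨f, 1⟩ : Wr H) * gW y = ⟨fun b => bif b then y⁻¹ * f false * y else f true, 1⟩ := by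
  ext b
  · cases b
    · show (1 : H)⁻¹ * f true * 1 = f true
      group
    · rfl
  · cases b <;> rfl

theorem gW_inv_mul_diagW_mul_gW (φ : MulAut H) (y h : H) :
    (gW y)⁻¹ * diagW φ h * gW y = ⟨fun b => bif b then y⁻¹ * h * y else φ h, 1⟩ :=
  gW_inv_mul_base_mul_gW y _

theorem conj_gW_diagW_mem_range_iff (φ : MulAut H) (y h : H) :
    (gW y)⁻¹ * diagW φ h * gW y ∈ Set.range (diagW φ) ↔ φ (φ h) = y⁻¹ * h * y := by
  rw [gW_inv_mul_diagW_mul_gW]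
  constructor
  · rintro ⟨h', hh'⟩
    have h'_eq : h' = φ h := congrFun (congrArg SemidirectProduct.left hh') false
    have φh'_eq : φ h' = y⁻¹ * h * y := congrFun (congrArg SemidirectProduct.left hh') true
    rwa [h'_eq] at φh'_eq
  · intro hφφ
    refine ⟨φ h, ?_⟩
    ext b
    · cases b <;> simp [diagW, hφφ]
    · rfl

end

/-- If `g = (y,1)τ` normalises the diagonal subgroup `Diag_φ(H×H) = {(h, h^φ)}`,
then `φ² = ι_y`, the inner automorphism `h ↦ y⁻¹ h y`. -/
theorem stmt_7 {H : Type*} [Group H] (φ : MulAut H) (y : H)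
    (hnorm : (fun x => (gW y)⁻¹ * x * gW y) '' Set.range (diagW φ) = Set.range (diagW φ)) :
    ∀ h : H, φ (φ h) = y⁻¹ * h * y := by
  intro h
  rw [← conj_gW_diagW_mem_range_iff, ← hnorm]
  exact Set.mem_image_of_mem _ (Set.mem_range_self h)
end

section
/- Let P be a finite 2-group normalised by an element τ with τ² ∈ P, suppose P is generated by the τ-conjugates σ^{τ^{-i}} of an involution σ ∈ P, and let L = Φ(P) be the Frattini subgroup. If J = ⟨L, σ⟩, then P = J · J^{τ^{-1}} and P/L ≅ C₂^c with c ≤ 2. -/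
lemma two_group_coatom {G : Type*} [Group G] [Finite G] (hG : IsPGroup 2 G)
    {M : Subgroup G} (hM : IsCoatom M) :
    (∀ x : G, x * x ∈ M) ∧ ∀ x y : G, x * y * x⁻¹ * y⁻¹ ∈ M := by
  have hnil : Group.IsNilpotent G := hG.isNilpotent
  have htfae := (isNilpotent_of_finite_tfae (G := G)).out 0 2
  have hnorm : M.Normal := htfae.mp hnil M hM
  let π := QuotientGroup.mk' M
  have hπ : Function.Surjective π := QuotientGroup.mk'_surjective M
  have hsub : ∀ H : Subgroup (G ⧸ M), H = ⊥ ∨ H = ⊤ := by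
    intro H
    have hMle : M ≤ H.comap π := fun x hx => by
      have h1 : π x = 1 := (QuotientGroup.eq_one_iff x).2 hx
      simpa [Subgroup.mem_comap, h1] using H.one_mem
    have hmc := Subgroup.map_comap_eq_self_of_surjective hπ H
    rcases eq_or_lt_of_le hMle with heq | hlt
    · left
      rw [← hmc, ← heq]
      ext y
      simp only [Subgroup.mem_map, Subgroup.mem_bot]
      constructor
      · rintro ⟨m, hm, rfl⟩
        exact (QuotientGroup.eq_one_iff m).2 hm
      · rintro rfl
        exact ⟨1, M.one_mem, map_one _⟩
    · right
      rw [← hmc, hM.2 _ hlt]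
      exact Subgroup.map_top_of_surjective _ hπ
  obtain ⟨g, hg⟩ : ∃ g : G, π g ≠ 1 := by
    by_contra h
    push_neg at h
    exact hM.1 (top_le_iff.1 fun x _ => (QuotientGroup.eq_one_iff x).1 (h x))
  have hQ : IsPGroup 2 (G ⧸ M) := hG.to_quotient M
  obtain ⟨k, hk⟩ := hQ (π g)
  set n := orderOf (π g) with hn
  have hdvd : n ∣ 2 ^ k := orderOf_dvd_of_pow_eq_one hk
  obtain ⟨m, hmk, hm⟩ := (Nat.dvd_prime_pow Nat.prime_two).1 hdvd
  have hm0 : m ≠ 0 := by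
    rintro rfl
    simp only [pow_zero] at hm
    exact hg (orderOf_eq_one_iff.1 hm)
  set h : G ⧸ M := (π g) ^ (2 ^ (m - 1)) with hh
  have hne : h ≠ 1 := by
    apply pow_ne_one_of_lt_orderOf (by positivity)
    rw [← hn, hm]
    exact Nat.pow_lt_pow_right one_lt_two (Nat.sub_lt (Nat.pos_of_ne_zero hm0) one_pos)
  have hsq : h * h = 1 := by
    rw [← pow_two, ← pow_mul, ← pow_succ, Nat.sub_add_cancel (Nat.one_le_iff_ne_zero.2 hm0), ← hm]
    exact pow_orderOf_eq_one _
  have htop : Subgroup.zpowers h = ⊤ := by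
    rcases hsub (Subgroup.zpowers h) with hb | ht
    · exact absurd ((Subgroup.zpowers_eq_bot).1 hb) hne
    · exact ht
  have hrep : ∀ y : G ⧸ M, ∃ z : ℤ, h ^ z = y := fun y => by
    have : y ∈ Subgroup.zpowers h := htop ▸ Subgroup.mem_top y
    exact this.imp fun z hz => hz
  have hcomm : ∀ u v : G ⧸ M, u * v = v * u := by
    intro u v
    obtain ⟨a, rfl⟩ := hrep u
    obtain ⟨b, rfl⟩ := hrep v
    rw [← zpow_add, ← zpow_add, add_comm]
  have husq : ∀ u : G ⧸ M, u * u = 1 := by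
    intro u
    obtain ⟨a, rfl⟩ := hrep u
    rw [← zpow_add, ← two_mul, zpow_mul]
    rw [show (h : G ⧸ M) ^ (2:ℤ) = h * h by rw [zpow_two], hsq, one_zpow]
  constructor
  · intro x
    rw [← QuotientGroup.eq_one_iff (x * x)]
    simp only [QuotientGroup.mk_mul]
    exact husq _
  · intro x y
    rw [← QuotientGroup.eq_one_iff]
    simp only [QuotientGroup.mk_mul, QuotientGroup.mk_inv]
    rw [hcomm ((x : G ⧸ M)) ((y : G ⧸ M))]
    group

lemma two_group_frattini {G : Type*} [Group G] [Finite G] (hG : IsPGroup 2 G) :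
    (∀ x : G, x * x ∈ frattini G) ∧ ∀ x y : G, x * y * x⁻¹ * y⁻¹ ∈ frattini G := by
  have hmem : ∀ x : G, (∀ M : Subgroup G, IsCoatom M → x ∈ M) → x ∈ frattini G := by
    intro x hx
    rw [frattini, Order.radical]
    simp only [Subgroup.mem_iInf]
    exact fun M hM => hx M hM
  exact ⟨fun x => hmem _ fun M hM => (two_group_coatom hG hM).1 x,
    fun x y => hmem _ fun M hM => (two_group_coatom hG hM).2 x y⟩

def conjEquivP {Q : Type*} [Group Q] (P : Subgroup Q) (g : Q)
    (h1 : ∀ x ∈ P, g * x * g⁻¹ ∈ P) (h2 : ∀ x ∈ P, g⁻¹ * x * g ∈ P) : ↥P ≃* ↥P where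
  toFun x := ⟨g * x * g⁻¹, h1 x x.2⟩
  invFun x := ⟨g⁻¹ * x * g, h2 x x.2⟩
  left_inv x := by ext; simp; group
  right_inv x := by ext; simp; group
  map_mul' x y := by ext; simp

theorem stmt_12 {Q : Type*} [Group Q] (P : Subgroup Q) [Finite P]
    (hP2 : IsPGroup 2 P)
    (τ : Q) (hτ : ∀ x ∈ P, τ⁻¹ * x * τ ∈ P ∧ τ * x * τ⁻¹ ∈ P) (hτ2 : τ ^ 2 ∈ P)
    (σ : Q) (hσ : σ ∈ P) (hσinv : σ ^ 2 = 1) (hσne : σ ≠ 1)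
    (hgen : P = Subgroup.closure {x : Q | ∃ i : ℕ, x = τ ^ i * σ * (τ ^ i)⁻¹})
    (hnoproper : ∀ R : Subgroup Q, R ≤ P →
      (∀ x ∈ R, τ⁻¹ * x * τ ∈ R ∧ τ * x * τ⁻¹ ∈ R) → σ ∈ R → R = P)
    -- L = Φ(P), the Frattini subgroup of P, and J = ⟨L, σ⟩
    (L : Subgroup Q) (hL : L = (frattini P).map P.subtype)
    (J : Subgroup Q) (hJ : J = Subgroup.closure ((L : Set Q) ∪ {σ})) :
    -- P = J · J^{τ⁻¹}
    (∀ x ∈ P, ∃ a ∈ J, ∃ b : Q, τ⁻¹ * b * τ ∈ J ∧ x = a * b) ∧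
    -- P/L ≅ C₂^c with c ≤ 2
    Nat.card P ≤ 4 * Nat.card L ∧
    (∀ x ∈ P, x * x ∈ L) ∧
    (∀ x ∈ P, ∀ y ∈ P, x * y * x⁻¹ * y⁻¹ ∈ L) := by
  have hfr := two_group_frattini hP2
  have hLP : L ≤ P := by rw [hL]; exact Subgroup.map_subtype_le _
  have hsq : ∀ x ∈ P, x * x ∈ L := by
    intro x hx
    rw [hL]
    exact Subgroup.mem_map.2 ⟨⟨x, hx⟩ * ⟨x, hx⟩, hfr.1 ⟨x, hx⟩, rfl⟩
  have hcm : ∀ x ∈ P, ∀ y ∈ P, x * y * x⁻¹ * y⁻¹ ∈ L := by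
    intro x hx y hy
    rw [hL]
    exact Subgroup.mem_map.2
      ⟨⟨x, hx⟩ * ⟨y, hy⟩ * (⟨x, hx⟩ : P)⁻¹ * (⟨y, hy⟩ : P)⁻¹, hfr.2 ⟨x, hx⟩ ⟨y, hy⟩, rfl⟩
  -- τ-invariance of L
  have hLconj : ∀ g : Q, (∀ x ∈ P, g * x * g⁻¹ ∈ P) → (∀ x ∈ P, g⁻¹ * x * g ∈ P) →
      ∀ x ∈ L, g * x * g⁻¹ ∈ L := by
    intro g h1 h2 x hx
    rw [hL] at hx ⊢
    obtain ⟨y, hy, rfl⟩ := Subgroup.mem_map.1 hx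
    set e := conjEquivP P g h1 h2 with he
    have hmap : (frattini ↥P).map e.toMonoidHom = frattini ↥P :=
      Subgroup.characteristic_iff_map_eq.mp inferInstance e
    refine Subgroup.mem_map.2 ⟨e y, ?_, rfl⟩
    rw [← hmap]
    exact Subgroup.mem_map.2 ⟨y, hy, rfl⟩
  have hLτ1 : ∀ x ∈ L, τ * x * τ⁻¹ ∈ L :=
    hLconj τ (fun x hx => (hτ x hx).2) (fun x hx => (hτ x hx).1)
  have hLτ2 : ∀ x ∈ L, τ⁻¹ * x * τ ∈ L := by
    have h := hLconj τ⁻¹ (fun x hx => by simpa using (hτ x hx).1)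
      (fun x hx => by simpa using (hτ x hx).2)
    intro x hx
    simpa using h x hx
  have hLpow : ∀ i : ℕ, ∀ x ∈ L, τ ^ i * x * (τ ^ i)⁻¹ ∈ L := by
    intro i
    induction i with
    | zero => intro x hx; simpa using hx
    | succ n ih =>
        intro x hx
        have he : τ ^ (n + 1) * x * (τ ^ (n + 1))⁻¹ = τ ^ n * (τ * x * τ⁻¹) * (τ ^ n)⁻¹ := by
          rw [pow_succ]; group
        rw [he]
        exact ih _ (hLτ1 x hx)
  set σ' := τ * σ * τ⁻¹ with hσ'
  have hσ'P : σ' ∈ P := (hτ σ hσ).2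
  have hσσ : σ * σ = 1 := by rw [← pow_two]; exact hσinv
  have hσ'σ' : σ' * σ' = 1 := by
    have : σ' * σ' = τ * (σ * σ) * τ⁻¹ := by rw [hσ']; group
    rw [this, hσσ]; group
  -- the commutator of σ with τ²
  have hc0 : σ⁻¹ * τ ^ 2 * σ * (τ ^ 2)⁻¹ ∈ L := by
    have := hcm σ⁻¹ (P.inv_mem hσ) (τ ^ 2) hτ2
    simpa using this
  -- Step 2 : P = closure (L ∪ {σ, σ'})
  set D := Subgroup.closure ((L : Set Q) ∪ {σ, σ'}) with hD
  have hσD : σ ∈ D := Subgroup.subset_closure (Or.inr (Set.mem_insert _ _))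
  have hσ'D : σ' ∈ D := Subgroup.subset_closure (Or.inr (Set.mem_insert_of_mem _ rfl))
  have hLD : ∀ x ∈ L, x ∈ D := fun x hx => Subgroup.subset_closure (Or.inl hx)
  have hci : ∀ i : ℕ, τ ^ i * σ * (τ ^ i)⁻¹ ∈ D ∧ τ ^ (i + 1) * σ * (τ ^ (i + 1))⁻¹ ∈ D := by
    intro i
    induction i with
    | zero =>
        constructor
        · simpa using hσD
        · simpa using hσ'D
    | succ n ih =>
        refine ⟨ih.2, ?_⟩
        have he : τ ^ (n + 2) * σ * (τ ^ (n + 2))⁻¹ =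
            (τ ^ n * σ * (τ ^ n)⁻¹) * (τ ^ n * (σ⁻¹ * τ ^ 2 * σ * (τ ^ 2)⁻¹) * (τ ^ n)⁻¹) := by
          rw [show n + 2 = n + 2 from rfl, pow_add]; group
        rw [he]
        exact D.mul_mem ih.1 (hLD _ (hLpow n _ hc0))
  have hPD : P ≤ D := by
    rw [hgen]
    refine (Subgroup.closure_le D).2 ?_
    rintro x ⟨i, rfl⟩
    exact (hci i).1
  -- J facts
  have hJP : J ≤ P := by
    rw [hJ]
    refine (Subgroup.closure_le P).2 ?_
    rintro x (hx | rfl)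
    · exact hLP hx
    · exact hσ
  have hLJ : ∀ x ∈ L, x ∈ J := fun x hx => hJ ▸ Subgroup.subset_closure (Or.inl hx)
  have hσJ : σ ∈ J := hJ ▸ Subgroup.subset_closure (Or.inr rfl)
  have hJ'P : ∀ b : Q, τ⁻¹ * b * τ ∈ J → b ∈ P := by
    intro b hb
    have hbP : τ⁻¹ * b * τ ∈ P := hJP hb
    have := (hτ _ hbP).2
    simpa [mul_assoc] using this
  -- The product set T = J * J'
  set T : Subgroup Q := {
    carrier := {x | ∃ a ∈ J, ∃ b : Q, τ⁻¹ * b * τ ∈ J ∧ x = a * b}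
    one_mem' := ⟨1, J.one_mem, 1, by simpa using J.one_mem, (one_mul 1).symm⟩
    mul_mem' := by
      rintro x y ⟨a₁, ha₁, b₁, hb₁, rfl⟩ ⟨a₂, ha₂, b₂, hb₂, rfl⟩
      refine ⟨a₁ * a₂, J.mul_mem ha₁ ha₂, (a₂⁻¹ * b₁ * a₂) * b₂, ?_, by group⟩
      have hl : b₁⁻¹ * a₂⁻¹ * b₁ * a₂ ∈ L := by
        have := hcm b₁⁻¹ (P.inv_mem (hJ'P b₁ hb₁)) a₂⁻¹ (P.inv_mem (hJP ha₂))
        simpa using this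
      have he : τ⁻¹ * ((a₂⁻¹ * b₁ * a₂) * b₂) * τ =
          ((τ⁻¹ * b₁ * τ) * (τ⁻¹ * (b₁⁻¹ * a₂⁻¹ * b₁ * a₂) * τ)) * (τ⁻¹ * b₂ * τ) := by
        group
      rw [he]
      exact J.mul_mem (J.mul_mem hb₁ (hLJ _ (hLτ2 _ hl))) hb₂
    inv_mem' := by
      rintro x ⟨a, ha, b, hb, rfl⟩
      refine ⟨a⁻¹, J.inv_mem ha, b⁻¹ * (b * a * b⁻¹ * a⁻¹), ?_, by group⟩
      have hl : b * a * b⁻¹ * a⁻¹ ∈ L := hcm b (hJ'P b hb) a (hJP ha)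
      have he : τ⁻¹ * (b⁻¹ * (b * a * b⁻¹ * a⁻¹)) * τ =
          (τ⁻¹ * b * τ)⁻¹ * (τ⁻¹ * (b * a * b⁻¹ * a⁻¹) * τ) := by group
      rw [he]
      exact J.mul_mem (J.inv_mem hb) (hLJ _ (hLτ2 _ hl)) } with hT
  have hDT : D ≤ T := by
    refine (Subgroup.closure_le T).2 ?_
    rintro x (hx | hx | hx)
    · exact ⟨x, hLJ _ hx, 1, by simpa using J.one_mem, (mul_one x).symm⟩
    · exact ⟨σ, hσJ, 1, by simpa using J.one_mem, by rw [hx, mul_one]⟩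
    · rw [Set.mem_singleton_iff] at hx
      refine ⟨1, J.one_mem, σ', ?_, by rw [hx, one_mul]⟩
      have : τ⁻¹ * σ' * τ = σ := by rw [hσ']; group
      rw [this]
      exact hσJ
  refine ⟨fun x hx => hDT (hPD hx), ?_, hsq, hcm⟩
  -- cardinality
  set F := frattini ↥P with hF
  haveI : F.Normal := inferInstance
  set s : ↥P ⧸ F := ((⟨σ, hσ⟩ : ↥P) : ↥P ⧸ F) with hs
  set s' : ↥P ⧸ F := ((⟨σ', hσ'P⟩ : ↥P) : ↥P ⧸ F) with hs'def
  have hs2 : s * s = 1 := by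
    have h1 : (⟨σ, hσ⟩ : ↥P) * ⟨σ, hσ⟩ = 1 := by ext; simpa using hσσ
    rw [hs, ← QuotientGroup.mk_mul, h1, QuotientGroup.mk_one]
  have hs'2 : s' * s' = 1 := by
    have h1 : (⟨σ', hσ'P⟩ : ↥P) * ⟨σ', hσ'P⟩ = 1 := by ext; simpa using hσ'σ'
    rw [hs'def, ← QuotientGroup.mk_mul, h1, QuotientGroup.mk_one]
  have hss' : Commute s s' := by
    have hcF : (⟨σ, hσ⟩ : ↥P) * ⟨σ', hσ'P⟩ * (⟨σ, hσ⟩ : ↥P)⁻¹ * (⟨σ', hσ'P⟩ : ↥P)⁻¹ ∈ F :=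
      hfr.2 _ _
    have h1 : s * s' * s⁻¹ * s'⁻¹ = 1 := by
      rw [hs, hs'def, ← QuotientGroup.mk_inv, ← QuotientGroup.mk_inv,
        ← QuotientGroup.mk_mul, ← QuotientGroup.mk_mul, ← QuotientGroup.mk_mul]
      exact (QuotientGroup.eq_one_iff _).2 hcF
    exact commutatorElement_eq_one_iff_commute.1 h1
  -- every element of P maps to s^z * s'^w in the quotient
  set W : Subgroup Q := {
    carrier := {q : Q | ∃ hq : q ∈ P, ∃ z w : ℤ, ((⟨q, hq⟩ : ↥P) : ↥P ⧸ F) = s ^ z * s' ^ w}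
    one_mem' := ⟨P.one_mem, 0, 0, by
      simp only [zpow_zero, mul_one]
      exact (QuotientGroup.eq_one_iff _).2 F.one_mem⟩
    mul_mem' := by
      rintro x y ⟨hx, z1, w1, h1⟩ ⟨hy, z2, w2, h2⟩
      refine ⟨P.mul_mem hx hy, z1 + z2, w1 + w2, ?_⟩
      have hxy : (⟨x * y, P.mul_mem hx hy⟩ : ↥P) = ⟨x, hx⟩ * ⟨y, hy⟩ := rfl
      have hc : Commute (s' ^ w1) (s ^ z2) := (hss'.symm).zpow_zpow w1 z2
      rw [hxy, QuotientGroup.mk_mul, h1, h2, hc.mul_mul_mul_comm, ← zpow_add, ← zpow_add]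
    inv_mem' := by
      rintro x ⟨hx, z1, w1, h1⟩
      refine ⟨P.inv_mem hx, -z1, -w1, ?_⟩
      have hxi : (⟨x⁻¹, P.inv_mem hx⟩ : ↥P) = (⟨x, hx⟩ : ↥P)⁻¹ := rfl
      have hc : Commute (s' ^ (-w1)) (s ^ (-z1)) := (hss'.symm).zpow_zpow _ _
      rw [hxi, QuotientGroup.mk_inv, h1, mul_inv_rev, ← zpow_neg, ← zpow_neg, hc.eq] } with hW
  have hDW : D ≤ W := by
    refine (Subgroup.closure_le W).2 ?_
    rintro x (hx | hx | hx)
    · refine ⟨hLP hx, 0, 0, ?_⟩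
      obtain ⟨y, hy, hyx⟩ := Subgroup.mem_map.1 (hL ▸ hx)
      have hxy : (⟨x, hLP hx⟩ : ↥P) = y := Subtype.ext hyx.symm
      rw [hxy, zpow_zero, zpow_zero, mul_one]
      exact (QuotientGroup.eq_one_iff _).2 hy
    · exact ⟨hx ▸ hσ, 1, 0, by subst hx; simp [hs]⟩
    · rw [Set.mem_singleton_iff] at hx
      exact ⟨hx ▸ hσ'P, 0, 1, by subst hx; simp [hs'def]⟩
  have hrepV : ∀ v : ↥P ⧸ F, ∃ z w : ℤ, v = s ^ z * s' ^ w := by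
    intro v
    obtain ⟨x, rfl⟩ := QuotientGroup.mk_surjective v
    obtain ⟨hq, z, w, h⟩ := hDW (hPD x.2)
    refine ⟨z, w, ?_⟩
    have hx' : (⟨(x : Q), hq⟩ : ↥P) = x := Subtype.ext rfl
    rw [hx'] at h
    exact h
  have hzp : ∀ a : ↥P ⧸ F, a * a = 1 → ∀ z : ℤ, a ^ z = 1 ∨ a ^ z = a := by
    intro a ha z
    have ha2 : a ^ (2 : ℤ) = 1 := by
      rw [show (2 : ℤ) = 1 + 1 by norm_num, zpow_add, zpow_one, ha]
    rcases Int.even_or_odd z with ⟨c, rfl⟩ | ⟨c, rfl⟩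
    · left
      rw [show c + c = 2 * c by ring, zpow_mul, ha2, one_zpow]
    · right
      rw [zpow_add, zpow_one, zpow_mul, ha2, one_zpow, one_mul]
  have hsurj : Function.Surjective
      (fun p : Bool × Bool => (if p.1 then s else 1) * (if p.2 then s' else 1)) := by
    intro v
    obtain ⟨z, w, rfl⟩ := hrepV v
    rcases hzp s hs2 z with h | h <;> rcases hzp s' hs'2 w with h' | h'
    · exact ⟨(false, false), by simp [h, h']⟩
    · exact ⟨(false, true), by simp [h, h']⟩
    · exact ⟨(true, false), by simp [h, h']⟩
    · exact ⟨(true, true), by simp [h, h']⟩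
  have h4 : Nat.card (↥P ⧸ F) ≤ 4 := by
    have hle := Nat.card_le_card_of_surjective _ hsurj
    have hcardb : Nat.card (Bool × Bool) = 4 := by
      simp [Nat.card_eq_fintype_card]
    omega
  have hPcard : Nat.card ↥P = Nat.card (↥P ⧸ F) * Nat.card F :=
    Subgroup.card_eq_card_quotient_mul_card_subgroup F
  have hLcard : Nat.card ↥L = Nat.card F := by
    rw [hL]
    exact (Nat.card_congr (Subgroup.equivMapOfInjective F P.subtype
      P.subtype_injective).toEquiv).symm
  rw [hPcard, hLcard]
  exact Nat.mul_le_mul_right _ h4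
end

section
/- Let H be a group, V ≤ H a subgroup, y ∈ H, φ ∈ Aut(H) with φ² = ι_y; set S = Diag_φ(V×V) and G⁺ = Diag_φ(H×H) in H wr Sym(2), and g = (y,1)τ, G = ⟨G⁺, g⟩. If y ∉ V·V^φ, then g⁻¹ ∉ SgS. -/
open scoped Pointwise

/-! Reading off the first coordinate: that of `s₁ g s₂` with `sᵢ = (vᵢ, vᵢ^φ)` is `v₁ y v₂^φ`,
while that of `g⁻¹` is `1`; so `g⁻¹ = s₁ g s₂` forces `y = v₁⁻¹ (v₂⁻¹)^φ ∈ V V^φ`. -/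

theorem left_false_diagW_mul_gW_mul_diagW {H : Type*} [Group H] (φ : MulAut H) (y v₁ v₂ : H) :
    (diagW φ v₁ * gW y * diagW φ v₂).left false = v₁ * y * φ v₂ :=
  rfl

theorem left_false_inv_gW {H : Type*} [Group H] (y : H) : (gW y)⁻¹.left false = 1 :=
  inv_one

theorem stmt_14_general {H : Type*} [Group H] (φ : MulAut H) (y : H)
    (V : Subgroup H)
    (hyV : y ∉ (V : Set H) * (⇑φ '' (V : Set H))) :
    ¬ ∃ s₁ ∈ diagW φ '' (V : Set H), ∃ s₂ ∈ diagW φ '' (V : Set H),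
        (gW y)⁻¹ = s₁ * gW y * s₂ := by
  rintro ⟨_, ⟨v₁, hv₁, rfl⟩, _, ⟨v₂, hv₂, rfl⟩, heq⟩
  have hprod : v₁ * y * φ v₂ = 1 := by
    rw [← left_false_diagW_mul_gW_mul_diagW, ← heq, left_false_inv_gW]
  refine hyV ⟨v₁⁻¹, V.inv_mem hv₁, φ v₂⁻¹, ⟨v₂⁻¹, V.inv_mem hv₂, rfl⟩, ?_⟩
  calc v₁⁻¹ * φ v₂⁻¹ = v₁⁻¹ * (v₁ * y * φ v₂) * (φ v₂)⁻¹ := by rw [hprod, mul_one, map_inv]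
    _ = y := by group

/-- With `S = Diag_φ(V×V)` and `g = (y,1)τ` in `H wr Sym(2)`, if `y ∉ V·V^φ`
then `g⁻¹ ∉ SgS`. -/
theorem stmt_14 {H : Type*} [Group H] (φ : MulAut H) (y : H)
    (hy : ∀ h : H, φ (φ h) = y⁻¹ * h * y)
    (V : Subgroup H)
    (hyV : y ∉ (V : Set H) * (⇑φ '' (V : Set H))) :
    ¬ ∃ s₁ ∈ diagW φ '' (V : Set H), ∃ s₂ ∈ diagW φ '' (V : Set H),
        (gW y)⁻¹ = s₁ * gW y * s₂ :=
  stmt_14_general φ y V hyV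
end

section
/- In PSL(2, p) for a prime p ≥ 7, generated by a = image of [[0,1],[-1,0]] and b = image of [[0,1],[-1,1]], the elements a and b have orders 2 and 3 respectively, and ab and ab² both have order p. -/
/-!
Modulo `-I`, which is central, `a² = -I` and `b³ = -I` become trivial, and `ab`, `ab²` are `-I`
times the transvections `!![1, -1; 0, 1]` and `!![1, 0; -1, 1]`, whose `p`-th powers are trivial
because `p = 0` in `𝔽_p`. A matrix with a nonzero off-diagonal entry is not scalar, so none of
these elements is trivial in `PSL(2, p)`, and each order is the prime exponent itself.
-/

open Matrix
open scoped MatrixGroups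

namespace Matrix

variable {n : Type*} [DecidableEq n] [Fintype n] {R : Type*} [CommRing R]

theorem transvection_pow {i j : n} (hij : i ≠ j) (c : R) (k : ℕ) :
    transvection i j c ^ k = transvection i j (k * c) := by
  induction k with
  | zero => simp
  | succ k ih =>
    rw [pow_succ, ih, transvection_mul_transvection_same i j hij]
    push_cast
    ring_nf

theorem neg_transvection_pow_char (p : ℕ) [CharP R p] {i j : n} (hij : i ≠ j) (c : R) :
    (-transvection i j c) ^ p = scalar n ((-1) ^ p) := by
  rw [neg_pow, transvection_pow hij, CharP.cast_eq_zero, zero_mul, transvection_zero, mul_one,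
    map_pow, map_neg, map_one]

namespace SpecialLinearGroup

theorem mem_center_of_coe_eq_scalar {A : SpecialLinearGroup n R} {r : R}
    (h : (A : Matrix n n R) = scalar n r) : A ∈ Subgroup.center (SpecialLinearGroup n R) :=
  Subgroup.mem_center_iff.mpr fun B => Subtype.ext <| by
    simp only [coe_mul, h, (scalar_commute r (Commute.all r) _).eq]

theorem notMem_center_of_coe_apply_ne_zero {A : SpecialLinearGroup n R} {i j : n} (hij : i ≠ j)
    (hA : (A : Matrix n n R) i j ≠ 0) : A ∉ Subgroup.center (SpecialLinearGroup n R) := by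
  intro h
  obtain ⟨r, -, hr⟩ := mem_center_iff.mp h
  exact hA (by rw [← hr, scalar_apply, diagonal_apply_ne _ hij])

theorem orderOf_mk_eq_prime {q : ℕ} [Fact q.Prime] {A : SpecialLinearGroup n R} {r : R}
    (hpow : ((A ^ q : SpecialLinearGroup n R) : Matrix n n R) = scalar n r) {i j : n}
    (hij : i ≠ j) (hA : (A : Matrix n n R) i j ≠ 0) :
    orderOf (QuotientGroup.mk A : ProjectiveSpecialLinearGroup n R) = q :=
  orderOf_eq_prime ((QuotientGroup.eq_one_iff _).mpr (mem_center_of_coe_eq_scalar hpow))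
    ((QuotientGroup.eq_one_iff _).not.mpr (notMem_center_of_coe_apply_ne_zero hij hA))

end SpecialLinearGroup

end Matrix

namespace PSL2Generators

variable {R : Type*} [CommRing R]

theorem a_sq : !![(0 : R), 1; -1, 0] ^ 2 = scalar (Fin 2) (-1) := by
  ext i j; fin_cases i <;> fin_cases j <;> simp [sq]

theorem b_cube : !![(0 : R), 1; -1, 1] ^ 3 = scalar (Fin 2) (-1) := by
  ext i j; fin_cases i <;> fin_cases j <;> simp [pow_succ]

theorem a_mul_b : !![(0 : R), 1; -1, 0] * !![0, 1; -1, 1] = -transvection 0 1 (-1) := by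
  ext i j; fin_cases i <;> fin_cases j <;> simp [transvection]

theorem a_mul_b_sq : !![(0 : R), 1; -1, 0] * !![0, 1; -1, 1] ^ 2 = -transvection 1 0 (-1) := by
  ext i j; fin_cases i <;> fin_cases j <;> simp [sq, transvection]

end PSL2Generators

theorem stmt_17_general (p : ℕ) (hp : p.Prime) :
    haveI : Fact p.Prime := ⟨hp⟩
    ∀ (A B : SpecialLinearGroup (Fin 2) (ZMod p)),
      (A : Matrix (Fin 2) (Fin 2) (ZMod p)) = !![0, 1; -1, 0] →
      (B : Matrix (Fin 2) (Fin 2) (ZMod p)) = !![0, 1; -1, 1] →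
      ∀ a b : PSL(2, ZMod p),
        a = QuotientGroup.mk A → b = QuotientGroup.mk B →
        orderOf a = 2 ∧ orderOf b = 3 ∧
        orderOf (a * b) = p ∧ orderOf (a * b ^ 2) = p := by
  have : Fact p.Prime := ⟨hp⟩
  rintro A B hA hB _ _ rfl rfl
  have hAB : ((A * B : SL(2, ZMod p)) : Matrix (Fin 2) (Fin 2) (ZMod p)) =
      -transvection 0 1 (-1) := by
    rw [Matrix.SpecialLinearGroup.coe_mul, hA, hB, PSL2Generators.a_mul_b]
  have hAB2 : ((A * B ^ 2 : SL(2, ZMod p)) : Matrix (Fin 2) (Fin 2) (ZMod p)) =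
      -transvection 1 0 (-1) := by
    rw [Matrix.SpecialLinearGroup.coe_mul, Matrix.SpecialLinearGroup.coe_pow, hA, hB,
      PSL2Generators.a_mul_b_sq]
  refine ⟨Matrix.SpecialLinearGroup.orderOf_mk_eq_prime (r := -1) ?_ zero_ne_one (by simp [hA]),
    Matrix.SpecialLinearGroup.orderOf_mk_eq_prime (r := -1) ?_ zero_ne_one (by simp [hB]),
    Matrix.SpecialLinearGroup.orderOf_mk_eq_prime (A := A * B) (r := (-1) ^ p) ?_ zero_ne_one
      (by simp [hAB, transvection]),
    Matrix.SpecialLinearGroup.orderOf_mk_eq_prime (A := A * B ^ 2) (r := (-1) ^ p) ?_ one_ne_zero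
      (by simp [hAB2, transvection])⟩
  · rw [Matrix.SpecialLinearGroup.coe_pow, hA, PSL2Generators.a_sq]
  · rw [Matrix.SpecialLinearGroup.coe_pow, hB, PSL2Generators.b_cube]
  · rw [Matrix.SpecialLinearGroup.coe_pow, hAB, neg_transvection_pow_char p zero_ne_one]
  · rw [Matrix.SpecialLinearGroup.coe_pow, hAB2, neg_transvection_pow_char p one_ne_zero]

theorem stmt_17 (p : ℕ) (hp : p.Prime) (hp7 : 7 ≤ p) :
    haveI : Fact p.Prime := ⟨hp⟩
    ∀ (A B : SpecialLinearGroup (Fin 2) (ZMod p)),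
      (A : Matrix (Fin 2) (Fin 2) (ZMod p)) = !![0, 1; -1, 0] →
      (B : Matrix (Fin 2) (Fin 2) (ZMod p)) = !![0, 1; -1, 1] →
      ∀ a b : PSL(2, ZMod p),
        a = QuotientGroup.mk A → b = QuotientGroup.mk B →
        orderOf a = 2 ∧ orderOf b = 3 ∧
        orderOf (a * b) = p ∧ orderOf (a * b ^ 2) = p :=
  stmt_17_general p hp
end

section
/- Let T = Alt(n) with n ≥ 5 odd, a = (1 2)(3 4) and b = (1 2 … n). Then a is an involution, b and ab have odd order, ⟨a, b⟩ = T, and moreover the set S = {ab, ba, (ab)⁻¹, (ba)⁻¹} has cardinality 4 and satisfies ⟨S⟩ = ⟨S²⟩ = T, where S² = {st : s, t ∈ S}. -/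
/-!
Write `t = (1 2)`, so that `a = t · b² t b⁻²`. The product of the conjugates `b^(2i) a b^(-2i)`,
`i < j`, telescopes to `t · b^(2j) t b^(-2j)`; as `b` has odd order, `b^(2j) = b` for some `j`, so
`t` normalises `⟨a, b⟩`. Since `⟨b, t⟩` is the full symmetric group, `⟨a, b⟩` has index at most
two; it lies in `Alt(n)` and `t` does not.

Cutting a cycle `f` to `swap x (f x) * f` removes `x` from it; doing this twice exhibits `ab` as an
`(n - 2)`-cycle.

Elements of odd order are powers of their squares, and `(ab)(ab)` and `(ba)(ab) = b²` lie in `S²`,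
so `⟨S²⟩` contains `ab` and `b`, hence `a`.
-/

open Equiv Equiv.Perm Subgroup
open scoped Pointwise

section Group

variable {G : Type*} [Group G]

theorem Subgroup.mem_of_sq_mem_of_odd_orderOf {H : Subgroup G} {x : G} (hx : Odd (orderOf x))
    (h : x ^ 2 ∈ H) : x ∈ H := by
  obtain ⟨m, hm⟩ := exists_pow_eq_self_of_coprime (Nat.coprime_two_left.mpr hx)
  exact hm ▸ pow_mem h m

theorem inv_ne_self_of_odd_orderOf {x : G} (hx : Odd (orderOf x)) (h1 : x ≠ 1) : x⁻¹ ≠ x := by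
  intro h
  have h2 : orderOf x = 2 := orderOf_eq_prime (by rw [sq, mul_eq_one_iff_eq_inv, h]) h1
  exact Nat.not_even_iff_odd.mpr (h2 ▸ hx) even_two

theorem zpow_eq_one_or_self {t : G} (ht : t * t = 1) (k : ℤ) : t ^ k = 1 ∨ t ^ k = t := by
  rcases k.even_or_odd' with ⟨m, rfl | rfl⟩
  · left; rw [zpow_mul, zpow_two, ht, one_zpow]
  · right; rw [zpow_add_one, zpow_mul, zpow_two, ht, one_zpow, one_mul]

theorem Subgroup.eq_of_le_of_sup_zpowers_eq_top {H K : Subgroup G} {t : G} (hHK : H ≤ K)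
    (htK : t ∉ K) (ht : t * t = 1) (htH : t ∈ normalizer (H : Set G))
    (htop : H ⊔ zpowers t = ⊤) : H = K := by
  refine le_antisymm hHK fun k hk => ?_
  have hk' : k ∈ ((H ⊔ zpowers t : Subgroup G) : Set G) := by rw [htop]; trivial
  rw [coe_mul_of_right_le_normalizer_left _ _ (zpowers_le.mpr htH)] at hk'
  obtain ⟨h, hh, _, ⟨j, rfl⟩, rfl⟩ := hk'
  rcases zpow_eq_one_or_self ht j with hj | hj <;> simp only [hj] at hk ⊢
  · simpa using hh
  · exact absurd (by simpa using mul_mem (inv_mem (hHK hh)) hk) htK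

theorem Subgroup.mem_normalizer_closure_of_involution {S : Set G} {t : G} (ht : t * t = 1)
    (h : ∀ s ∈ S, t * s * t ∈ closure S) : t ∈ normalizer (closure S : Set G) := by
  have htinv : t⁻¹ = t := inv_eq_of_mul_eq_one_right ht
  have hconj : closure S ≤ (closure S).comap (MulAut.conj t).toMonoidHom :=
    closure_le _ |>.mpr fun s hs => by simpa [htinv] using h s hs
  refine mem_normalizer_iff.mpr fun s => ⟨fun hs => hconj hs, fun hs => ?_⟩
  simpa [htinv, mul_assoc, ← mul_assoc t t, ht] using hconj hs

theorem mul_conj_pow_mem_closure {t b : G} (ht : t * t = 1) (j : ℕ) :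
    t * (b ^ (2 * j) * t * (b ^ (2 * j))⁻¹) ∈ closure {t * (b ^ 2 * t * (b ^ 2)⁻¹), b} := by
  induction j with
  | zero => simp [ht]
  | succ j ih =>
    have hb : b ^ (2 * j) ∈ closure {t * (b ^ 2 * t * (b ^ 2)⁻¹), b} :=
      pow_mem (subset_closure (Set.mem_insert_of_mem _ (Set.mem_singleton b))) _
    have key : t * (b ^ (2 * (j + 1)) * t * (b ^ (2 * (j + 1)))⁻¹) =
        t * (b ^ (2 * j) * t * (b ^ (2 * j))⁻¹) * b ^ (2 * j) * (t * (b ^ 2 * t * (b ^ 2)⁻¹)) *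
          (b ^ (2 * j))⁻¹ := by
      simp only [mul_assoc, inv_mul_cancel_left]
      rw [← mul_assoc t t, ht, one_mul]
      group
    rw [key]
    exact mul_mem (mul_mem (mul_mem ih hb) (subset_closure (Set.mem_insert _ _))) (inv_mem hb)

theorem closure_mul_conj_sq_eq {K : Subgroup G} {t b : G} (ht : t * t = 1)
    (hcomm : Commute t (b ^ 2 * t * (b ^ 2)⁻¹)) (hb : Odd (orderOf b))
    (haK : t * (b ^ 2 * t * (b ^ 2)⁻¹) ∈ K) (hbK : b ∈ K) (htK : t ∉ K)
    (htop : closure {b, t} = ⊤) : closure {t * (b ^ 2 * t * (b ^ 2)⁻¹), b} = K := by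
  set u := b ^ 2 * t * (b ^ 2)⁻¹
  set H := closure {t * u, b}
  have hbH : b ∈ H := subset_closure (Set.mem_insert_of_mem _ (Set.mem_singleton b))
  have htbt : t * b * t ∈ H := by
    obtain ⟨r, hr⟩ := hb
    have hb' : b ^ (2 * (r + 1)) = b := by
      rw [show 2 * (r + 1) = orderOf b + 1 by omega, pow_succ, pow_orderOf_eq_one, one_mul]
    have := mul_mem (mul_conj_pow_mem_closure (b := b) ht (r + 1)) hbH
    rw [hb'] at this
    convert this using 1
    group
  refine eq_of_le_of_sup_zpowers_eq_top ?_ htK ht ?_ ?_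
  · exact closure_le _ |>.mpr (Set.insert_subset haK (Set.singleton_subset_iff.mpr hbK))
  · refine mem_normalizer_closure_of_involution ht fun s hs => ?_
    rcases hs with rfl | rfl
    · rw [← mul_assoc t t, ht, one_mul, ← hcomm.eq]
      exact subset_closure (Set.mem_insert _ _)
    · exact htbt
  · refine eq_top_iff.mpr (htop ▸ closure_le _ |>.mpr ?_)
    exact Set.insert_subset (mem_sup_left hbH)
      (Set.singleton_subset_iff.mpr (mem_sup_right (mem_zpowers t)))

theorem ncard_mul_mul_inv_inv {a b : G} (ha : a * a = 1) (hab : a * b ≠ b * a) (hb : b ^ 2 ≠ 1)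
    (hodd : Odd (orderOf (a * b))) :
    ({a * b, b * a, (a * b)⁻¹, (b * a)⁻¹} : Set G).ncard = 4 := by
  have hab1 : a * b ≠ 1 := fun h => hab (h.trans (mul_eq_one_comm.mp h).symm)
  have hodd' : Odd (orderOf (b * a)) :=
    (SemiconjBy.orderOf_eq b (x := a * b) (y := b * a) (mul_assoc b a b).symm) ▸ hodd
  have hba_ab : b * a * (a * b) = b ^ 2 := by rw [mul_assoc, ← mul_assoc a, ha, one_mul, pow_two]
  have hab_ba : a * b * (b * a) = a * b ^ 2 * a⁻¹ := by
    rw [inv_eq_of_mul_eq_one_right ha, pow_two]; simp only [mul_assoc]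
  refine Set.ncard_eq_four.mpr ⟨_, _, _, _, hab, ?_, ?_, ?_, ?_, inv_injective.ne hab, rfl⟩
  · exact (inv_ne_self_of_odd_orderOf hodd hab1).symm
  · rw [Ne, eq_inv_iff_mul_eq_one, hab_ba, conj_eq_one_iff]; exact hb
  · rw [Ne, eq_inv_iff_mul_eq_one, hba_ab]; exact hb
  · exact (inv_ne_self_of_odd_orderOf hodd' fun h => hab1 (mul_eq_one_comm.mpr h)).symm

theorem closure_eq_and_closure_mul_self_eq {a b : G} {S : Set G}
    (hS : S = {a * b, b * a, (a * b)⁻¹, (b * a)⁻¹}) (ha : a * a = 1) (hb : Odd (orderOf b))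
    (hab : Odd (orderOf (a * b))) :
    closure S = closure {a, b} ∧ closure (S * S) = closure {a, b} := by
  have hmem : ∀ x ∈ S, ∀ y ∈ S, x * y ∈ closure (S * S) :=
    fun x hx y hy => subset_closure (Set.mul_mem_mul hx hy)
  have habS : a * b ∈ S := by simp [hS]
  have hbaS : b * a ∈ S := by simp [hS]
  have hab_mem : a * b ∈ closure (S * S) :=
    mem_of_sq_mem_of_odd_orderOf hab (sq (a * b) ▸ hmem _ habS _ habS)
  have hb_mem : b ∈ closure (S * S) := by
    have hb2 : b ^ 2 = b * a * (a * b) := by rw [mul_assoc, ← mul_assoc a, ha, one_mul, sq]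
    exact mem_of_sq_mem_of_odd_orderOf hb (hb2 ▸ hmem _ hbaS _ habS)
  have ha_mem : a ∈ closure (S * S) := by
    simpa using mul_mem hab_mem (inv_mem hb_mem)
  have hle : closure {a, b} ≤ closure (S * S) :=
    closure_le _ |>.mpr (Set.insert_subset ha_mem (Set.singleton_subset_iff.mpr hb_mem))
  have hSS : closure (S * S) ≤ closure S := (closure_mul_le S S).trans (by rw [sup_idem])
  have hS_le : closure S ≤ closure {a, b} := by
    have ha' : a ∈ closure {a, b} := subset_closure (Set.mem_insert _ _)
    have hb' : b ∈ closure {a, b} := subset_closure (Set.mem_insert_of_mem _ (Set.mem_singleton b))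
    refine closure_le _ |>.mpr ?_
    rintro x hx
    rw [hS] at hx
    rcases hx with rfl | rfl | rfl | rfl <;>
      simp only [SetLike.mem_coe, inv_mem_iff, mul_mem ha' hb', mul_mem hb' ha']
  exact ⟨le_antisymm hS_le (hle.trans hSS), le_antisymm (hSS.trans hS_le) hle⟩

end Group

namespace Equiv.Perm.IsCycle

theorem pow_apply_ne_pow_apply {α : Type*} [Finite α] {b : Perm α} {x : α} (hb : IsCycle b)
    (hx : b x ≠ x) {i j : ℕ} (hi : i < orderOf b) (hj : j < orderOf b) (hij : i ≠ j) :
    (b ^ i) x ≠ (b ^ j) x :=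
  fun h => hij (pow_injOn_Iio_orderOf hi hj (hb.pow_eq_pow_iff.mpr ⟨x, hx, h⟩))

variable {α : Type*} [Fintype α] [DecidableEq α] {b : Perm α} {x : α}

theorem orderOf_swap_mul {f : Perm α} (hf : IsCycle f) (hx : f x ≠ x) (hffx : f (f x) ≠ x) :
    orderOf (swap x (f x) * f) = orderOf f - 1 := by
  rw [(hf.swap_mul hx hffx).orderOf, hf.orderOf, support_swap_mul_eq _ _ hffx,
    Finset.sdiff_singleton_eq_erase, Finset.card_erase_of_mem (mem_support.mpr hx)]

theorem commute_swap_swap (hb : IsCycle b) (hx : b x ≠ x) (h4 : 4 ≤ orderOf b) :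
    Commute (swap x (b x)) (swap ((b ^ 2) x) ((b ^ 3) x)) := by
  refine (disjoint_swap_swap ?_).commute
  have := (List.nodup_range (n := 4)).map_on fun i hi j hj h =>
    not_not.mp (hb.pow_apply_ne_pow_apply (x := x) hx (i := i) (j := j)
      (by rw [List.mem_range] at hi; omega) (by rw [List.mem_range] at hj; omega) · h)
  simpa [List.range_succ] using this

theorem swap_mul_swap_mul_self (hb : IsCycle b) (hx : b x ≠ x) (h4 : 4 ≤ orderOf b) :
    swap x (b x) * swap ((b ^ 2) x) ((b ^ 3) x) *
      (swap x (b x) * swap ((b ^ 2) x) ((b ^ 3) x)) = 1 := by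
  rw [(hb.commute_swap_swap hx h4).symm.mul_mul_mul_comm, swap_mul_self, swap_mul_self, one_mul]

theorem swap_mul_swap_apply (hb : IsCycle b) (hx : b x ≠ x) (h4 : 4 ≤ orderOf b) :
    (swap x (b x) * swap ((b ^ 2) x) ((b ^ 3) x)) x = b x := by
  have h2 : x ≠ (b ^ 2) x := hb.pow_apply_ne_pow_apply hx (i := 0) (by omega) (by omega) (by omega)
  have h3 : x ≠ (b ^ 3) x := hb.pow_apply_ne_pow_apply hx (i := 0) (by omega) (by omega) (by omega)
  rw [mul_apply, swap_apply_of_ne_of_ne h2 h3, swap_apply_left]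

theorem swap_mul_swap_ne_one (hb : IsCycle b) (hx : b x ≠ x) (h4 : 4 ≤ orderOf b) :
    swap x (b x) * swap ((b ^ 2) x) ((b ^ 3) x) ≠ 1 := fun h =>
  hx (by simpa [h] using (hb.swap_mul_swap_apply hx h4).symm)

theorem swap_mul_swap_mul_apply (hb : IsCycle b) (hx : b x ≠ x) (h4 : 4 ≤ orderOf b) :
    (swap x (b x) * swap ((b ^ 2) x) ((b ^ 3) x) * b) x = x := by
  have h2 : b x ≠ (b ^ 2) x :=
    hb.pow_apply_ne_pow_apply hx (i := 1) (by omega) (by omega) (by omega)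
  have h3 : b x ≠ (b ^ 3) x :=
    hb.pow_apply_ne_pow_apply hx (i := 1) (by omega) (by omega) (by omega)
  rw [mul_apply, mul_apply, swap_apply_of_ne_of_ne h2 h3, swap_apply_right]

theorem swap_mul_swap_mul_ne (hb : IsCycle b) (hx : b x ≠ x) (h4 : 4 ≤ orderOf b) :
    swap x (b x) * swap ((b ^ 2) x) ((b ^ 3) x) * b ≠
      b * (swap x (b x) * swap ((b ^ 2) x) ((b ^ 3) x)) := by
  intro h
  have h0 := DFunLike.congr_fun h x
  rw [hb.swap_mul_swap_mul_apply hx h4, mul_apply, hb.swap_mul_swap_apply hx h4, ← mul_apply,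
    ← pow_two] at h0
  exact hb.pow_apply_ne_pow_apply hx (i := 0) (j := 2) (by omega) (by omega) (by omega) h0

theorem orderOf_swap_mul_swap_mul (hb : IsCycle b) (hx : b x ≠ x) (h5 : 5 ≤ orderOf b) :
    orderOf (swap x (b x) * swap ((b ^ 2) x) ((b ^ 3) x) * b) = orderOf b - 2 := by
  have hne : ∀ i j, i < 5 → j < 5 → i ≠ j → (b ^ i) x ≠ (b ^ j) x := fun i j hi hj hij =>
    hb.pow_apply_ne_pow_apply hx (by omega) (by omega) hij
  have hsucc : ∀ k, b ((b ^ k) x) = (b ^ (k + 1)) x := fun k => by rw [pow_succ', mul_apply]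
  set c := swap x (b x) * b
  have hbbx : b (b x) ≠ x := hsucc 1 ▸ hne 2 0 (by omega) (by omega) (by omega)
  have hcyc : IsCycle c := hb.swap_mul hx hbbx
  have hc2 : c ((b ^ 2) x) = (b ^ 3) x := by
    rw [mul_apply, hsucc]
    exact swap_apply_of_ne_of_ne (hne 3 0 (by omega) (by omega) (by omega))
      (hne 3 1 (by omega) (by omega) (by omega))
  have hc3 : c ((b ^ 3) x) = (b ^ 4) x := by
    rw [mul_apply, hsucc]
    exact swap_apply_of_ne_of_ne (hne 4 0 (by omega) (by omega) (by omega))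
      (hne 4 1 (by omega) (by omega) (by omega))
  rw [(hb.commute_swap_swap hx (by omega)).eq, mul_assoc, ← hc2,
    hcyc.orderOf_swap_mul (by rw [hc2]; exact hne 3 2 (by omega) (by omega) (by omega))
      (by rw [hc2, hc3]; exact hne 4 2 (by omega) (by omega) (by omega)),
    hb.orderOf_swap_mul hx hbbx]
  omega

theorem closure_swap_mul_swap_eq_alternatingGroup (hb : IsCycle b)
    (hsupp : b.support = Finset.univ) (hodd : Odd (orderOf b)) (h4 : 4 ≤ orderOf b) (x : α) :
    closure {swap x (b x) * swap ((b ^ 2) x) ((b ^ 3) x), b} = alternatingGroup α := by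
  have hx : b x ≠ x := mem_support.mp (hsupp ▸ Finset.mem_univ x)
  have hconj : b ^ 2 * swap x (b x) * (b ^ 2)⁻¹ = swap ((b ^ 2) x) ((b ^ 3) x) := by
    rw [← swap_apply_apply, pow_succ b 2, mul_apply]
  have hsign : Perm.sign (swap x (b x)) = -1 := sign_swap hx.symm
  rw [← hconj]
  refine closure_mul_conj_sq_eq (swap_mul_self _ _) (hconj ▸ hb.commute_swap_swap hx h4) hodd
    ?_ ?_ ?_ (closure_cycle_adjacent_swap hb hsupp x)
  · rw [hconj, mem_alternatingGroup, Perm.sign_mul, hsign,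
      sign_swap (hb.pow_apply_ne_pow_apply hx (by omega) (by omega) (by omega))]
    rfl
  · rw [mem_alternatingGroup, hb.sign, ← hb.orderOf, hodd.neg_one_pow, neg_neg]
  · rw [mem_alternatingGroup, hsign]
    decide

end Equiv.Perm.IsCycle

section finRotate

variable {n : ℕ}

theorem finRotate_mk {k : ℕ} (h : k + 1 < n) : finRotate n ⟨k, by omega⟩ = ⟨k + 1, h⟩ := by
  obtain ⟨m, rfl⟩ : ∃ m, n = m + 1 := ⟨n - 1, by omega⟩
  ext
  rw [coe_finRotate_of_ne_last (by simp [Fin.ext_iff]; omega)]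

theorem finRotate_pow_mk_zero {k : ℕ} (h : k < n) :
    (finRotate n ^ k) ⟨0, by omega⟩ = ⟨k, h⟩ := by
  induction k with
  | zero => rfl
  | succ k ih => rw [pow_succ', mul_apply, ih (by omega), finRotate_mk]

theorem orderOf_finRotate (hn : 2 ≤ n) : orderOf (finRotate n) = n := by
  rw [(isCycle_finRotate_of_le hn).orderOf, support_finRotate_of_le hn, Finset.card_univ,
    Fintype.card_fin]

end finRotate

theorem stmt_18 (n : ℕ) (hn : 5 ≤ n) (hodd : Odd n)
    (a b : Equiv.Perm (Fin n))
    -- a = (1 2)(3 4)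
    (ha : a = Equiv.swap (⟨0, by omega⟩ : Fin n) ⟨1, by omega⟩ *
              Equiv.swap (⟨2, by omega⟩ : Fin n) ⟨3, by omega⟩)
    -- b = (1 2 ... n)
    (hb : b = finRotate n)
    (S : Set (Equiv.Perm (Fin n)))
    (hS : S = {a * b, b * a, (a * b)⁻¹, (b * a)⁻¹}) :
    a ^ 2 = 1 ∧ a ≠ 1 ∧
    Odd (orderOf b) ∧ Odd (orderOf (a * b)) ∧
    Subgroup.closure {a, b} = alternatingGroup (Fin n) ∧
    S.ncard = 4 ∧
    Subgroup.closure S = alternatingGroup (Fin n) ∧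
    Subgroup.closure (S * S) = alternatingGroup (Fin n) := by
  subst hb
  have hn2 : 2 ≤ n := by omega
  have hbc := isCycle_finRotate_of_le hn2
  have hord := orderOf_finRotate hn2
  have hb_odd : Odd (orderOf (finRotate n)) := by rwa [hord]
  have hx : finRotate n ⟨0, by omega⟩ ≠ ⟨0, by omega⟩ := by rw [finRotate_mk (by omega)]; simp
  have ha' : a = swap ⟨0, by omega⟩ (finRotate n ⟨0, by omega⟩) *
      swap ((finRotate n ^ 2) ⟨0, by omega⟩) ((finRotate n ^ 3) ⟨0, by omega⟩) := by
    rw [ha, finRotate_mk, finRotate_pow_mk_zero, finRotate_pow_mk_zero]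
  have ha2 : a * a = 1 := ha' ▸ hbc.swap_mul_swap_mul_self hx (by omega)
  have hab_odd : Odd (orderOf (a * finRotate n)) := by
    rw [ha', hbc.orderOf_swap_mul_swap_mul hx (by omega), hord]
    exact Nat.Odd.sub_even (by omega) hodd even_two
  have hgen : closure {a, finRotate n} = alternatingGroup (Fin n) := ha' ▸
    hbc.closure_swap_mul_swap_eq_alternatingGroup (support_finRotate_of_le hn2) hb_odd
      (by omega) _
  obtain ⟨hS1, hS2⟩ := closure_eq_and_closure_mul_self_eq hS ha2 hb_odd hab_odd
  refine ⟨sq a ▸ ha2, ha' ▸ hbc.swap_mul_swap_ne_one hx (by omega), hb_odd, hab_odd, hgen, ?_,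
    hS1.trans hgen, hS2.trans hgen⟩
  rw [hS]
  exact ncard_mul_mul_inv_inv ha2 (ha' ▸ hbc.swap_mul_swap_mul_ne hx (by omega))
    (pow_ne_one_of_lt_orderOf two_ne_zero (by omega)) hab_odd
end
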